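/- arXiv:0901.2717 — 6 statements merged into one kernel-verified Lean document; each statement's English description precedes it below -/
import Mathlib

section
/- If H(t), P(t) are families of bounded operators with t ↦ H(t) differentiable, P(t) skew-adjoint with norm-continuous dependence on t, and the Lax equation dH/dt = P(t)H(t) − H(t)P(t) holds, then H(t) = U(t,s)H(s)U(t,s)^{-1} where U is the propagator of P; in particular ‖H(t)‖ = ‖H(s)‖ for all t, s. -/
/-!
Skew-adjointness of `P` makes `U(t,s)* U(t,s)` constant in `t`, hence equal to `1`; together with
the inverse `V` this makes `U(t,s)` unitary with `V(t,s) = U(t,s)*`. By the Lax equation both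
`τ ↦ H(τ) U(τ,s)` and `τ ↦ U(τ,s) H(s)` solve the linear equation `X' = P X` with value `H(s)` at
`τ = s`, so they coincide by uniqueness for linear ODEs with continuous coefficients. Conjugation
by a unitary preserves the norm of a C⋆-algebra.
-/

open Set

section LinearODE

variable {R : Type*} [NormedRing R] [NormedSpace ℝ R]

theorem eq_of_hasDerivAt_mul_left {P f g : ℝ → R} (hP : Continuous P)
    (hf : ∀ t, HasDerivAt f (P t * f t) t) (hg : ∀ t, HasDerivAt g (P t * g t) t)
    {t₀ : ℝ} (heq : f t₀ = g t₀) : f = g := by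
  funext t
  obtain ⟨a, b, ht, ht₀⟩ : ∃ a b, t ∈ Ioo a b ∧ t₀ ∈ Ioo a b :=
    ⟨min t t₀ - 1, max t t₀ + 1, by grind⟩
  obtain ⟨C, hC⟩ := isCompact_Icc.exists_bound_of_continuousOn (hP.continuousOn (s := Icc a b))
  have hlip : ∀ τ ∈ Ioo a b, LipschitzOnWith C.toNNReal (P τ * ·) univ := fun τ hτ ↦
    ((lipschitzWith_smul (P τ)).weaken <| by
      rw [← NNReal.coe_le_coe, coe_nnnorm]
      exact (hC τ (Ioo_subset_Icc_self hτ)).trans (Real.le_coe_toNNReal C)).lipschitzOnWith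
  exact ODE_solution_unique_of_mem_Ioo hlip ht₀ (fun τ _ ↦ ⟨hf τ, mem_univ _⟩)
    (fun τ _ ↦ ⟨hg τ, mem_univ _⟩) heq ht

end LinearODE

section Lax

variable {A : Type*} [NormedRing A] [NormedAlgebra ℝ A]

theorem HasDerivAt.lax_mul {H U : ℝ → A} {P : A} {t : ℝ}
    (hH : HasDerivAt H (P * H t - H t * P) t) (hU : HasDerivAt U (P * U t) t) :
    HasDerivAt (fun τ ↦ H τ * U τ) (P * (H t * U t)) t :=
  (hH.mul hU).congr_deriv (by noncomm_ring)

theorem star_mul_self_eq_of_hasDerivAt_skew [StarRing A] [ContinuousStar A] [StarModule ℝ A]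
    {P U : ℝ → A} (hP : ∀ t, star (P t) = -P t) (hU : ∀ t, HasDerivAt U (P t * U t) t)
    (t s : ℝ) : star (U t) * U t = star (U s) * U s := by
  have hderiv : ∀ τ, HasDerivAt (fun τ ↦ star (U τ) * U τ) 0 τ := fun τ ↦ by
    refine ((hU τ).star.mul (hU τ)).congr_deriv ?_
    rw [star_mul, hP]
    noncomm_ring
  exact is_const_of_deriv_eq_zero (fun τ ↦ (hderiv τ).differentiableAt)
    (fun τ ↦ (hderiv τ).deriv) t s

end Lax

/-- If `H(t)`, `P(t)` are bounded operator families, `t ↦ H(t)` differentiable,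
`P(t)` skew-adjoint and norm-continuous, and the Lax equation `dH/dt = P(t)H(t) − H(t)P(t)`
holds, then `H(t) = U(t,s) H(s) U(t,s)⁻¹` where `U` is the propagator of `P`; in particular
`‖H(t)‖ = ‖H(s)‖` for all `t, s`. -/
theorem lax_equation_unitary_equivalence
    {𝓗 : Type*} [NormedAddCommGroup 𝓗] [InnerProductSpace ℂ 𝓗] [CompleteSpace 𝓗]
    (H P : ℝ → 𝓗 →L[ℂ] 𝓗)
    (hPcont : Continuous P)
    (hPskew : ∀ t, ContinuousLinearMap.adjoint (P t) = -(P t))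
    (hLax : ∀ t, HasDerivAt H (P t ∘L H t - H t ∘L P t) t)
    (U V : ℝ → ℝ → 𝓗 →L[ℂ] 𝓗)
    (hUderiv : ∀ s t, HasDerivAt (fun τ => U τ s) (P t ∘L U t s) t)
    (hUinit : ∀ s, U s s = 1)
    (hV : ∀ t s, U t s ∘L V t s = 1 ∧ V t s ∘L U t s = 1) :
    ∀ t s, H t = U t s ∘L H s ∘L V t s ∧ ‖H t‖ = ‖H s‖ := by
  simp only [← ContinuousLinearMap.mul_def] at hLax hUderiv hV ⊢
  intro t s
  have hintertwine : (fun τ ↦ H τ * U τ s) = fun τ ↦ U τ s * H s :=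
    eq_of_hasDerivAt_mul_left hPcont (fun τ ↦ (hLax τ).lax_mul (hUderiv s τ))
      (fun τ ↦ by simpa only [mul_assoc] using (hUderiv s τ).mul_const (H s))
      (t₀ := s) (by simp [hUinit])
  have hskew : ∀ τ, star (P τ) = -P τ := fun τ ↦ by
    rw [ContinuousLinearMap.star_eq_adjoint, hPskew]
  have hisometry : star (U t s) * U t s = 1 := by
    rw [star_mul_self_eq_of_hasDerivAt_skew hskew (hUderiv s) t s, hUinit, star_one, one_mul]
  have hVstar : V t s = star (U t s) := (left_inv_eq_right_inv hisometry (hV t s).1).symm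
  have hunitary : U t s ∈ unitary (𝓗 →L[ℂ] 𝓗) := ⟨hisometry, hVstar ▸ (hV t s).1⟩
  have hconj : H t = U t s * H s * V t s := by
    rw [← congrFun hintertwine t, mul_assoc, (hV t s).1, mul_one]
  refine ⟨by rw [hconj, mul_assoc], ?_⟩
  rw [hconj, hVstar, CStarRing.norm_mul_coe_unitary _ ⟨_, Unitary.star_mem hunitary⟩,
    CStarRing.norm_coe_unitary_mul ⟨_, hunitary⟩]
end

section
/- Main theorem (preservation of spatial asymptotics): Let w(n) ≥ 1 with sup_n(w(n+1)/w(n) + w(n)/w(n+1)) < ∞ and 1 ≤ p ≤ ∞. Suppose a₀, b₀, ã₀, b̃₀ are bounded sequences with ‖(a₀⁺−a₀, b₀⁺−b₀)‖_{w,p} < ∞ and ‖(ã₀, b̃₀)‖_{w,p} < ∞, and let (a(t), b(t)) be the unique Toda solution with a(0) = a₀ + ã₀ ≠ 0, b(0) = b₀ + b̃₀. Then a(t) = a₀ + ã(t), b(t) = b₀ + b̃(t) with ‖(ã(t), b̃(t))‖_{w,p} < ∞ for all t ∈ ℝ. -/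
open scoped ENNReal

/-- The weighted `ℓ^p_w` "norm" of a pair of sequences, valued in `ℝ≥0∞`:
`‖(a,b)‖_{w,p} = (Σ_n w(n)(|a(n)|^p + |b(n)|^p))^{1/p}` for `p < ∞` and
`sup_n w(n)(|a(n)| + |b(n)|)` for `p = ∞`. -/
noncomputable def wnorm2 (w : ℤ → ℝ) (p : ℝ≥0∞) (f g : ℤ → ℝ) : ℝ≥0∞ :=
  if p = ∞ then ⨆ n, ENNReal.ofReal (w n * (|f n| + |g n|))
  else (∑' n, ENNReal.ofReal (w n * (|f n| ^ p.toReal + |g n| ^ p.toReal))) ^ (1 / p.toReal)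

/-!
Write `ε(t, n) = |a(t, n) - a₀(n)| + |b(t, n) - b₀(n)|`. Integrating the Toda equations and using
a uniform bound `M` on the solution gives the chain inequality `ε(s) ≤ g + 5M ∫₀ˢ S ε(σ) dσ`, where
`S h (n) = h (n - 1) + h n + h (n + 1)` and `g` is built from `ε(0)` and the differences
`a₀⁺ - a₀`, `b₀⁺ - b₀`. Picard iteration turns this into `ε(t) ≤ ∑ₖ (5Mt)ᵏ/k! Sᵏ g` up to a
remainder that vanishes as the number of iterations grows. The ratio bound on `w` makes `S` a
bounded operator on the weighted `ℓᵖ` space, so the weighted norm of `ε(t)` is at most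
`exp (5Mt(2C + 1))` times that of `g`. Negative times follow from the symmetry
`(a, b)(t) ↦ (a, -b)(-t)` of the Toda lattice.
-/

open MeasureTheory Filter Topology Set

def nbhdSum : (ℤ → ℝ) →ₗ[ℝ] (ℤ → ℝ) where
  toFun h n := h (n - 1) + h n + h (n + 1)
  map_add' h h' := by ext n; simp only [Pi.add_apply]; ring
  map_smul' c h := by ext n; simp only [Pi.smul_apply, smul_eq_mul, RingHom.id_apply]; ring

lemma nbhdSum_apply (h : ℤ → ℝ) (n : ℤ) : nbhdSum h n = h (n - 1) + h n + h (n + 1) := rfl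

lemma nbhdSum_const (r : ℝ) : nbhdSum (fun _ => r) = fun _ => 3 * r := by
  ext n; rw [nbhdSum_apply]; ring

lemma nbhdSum_mono {h h' : ℤ → ℝ} (hh : h ≤ h') : nbhdSum h ≤ nbhdSum h' := fun n => by
  simp only [nbhdSum_apply]; linarith [hh (n - 1), hh n, hh (n + 1)]

noncomputable def nbhdExpPartial (c : ℝ) (g : ℤ → ℝ) (N : ℕ) : ℤ → ℝ :=
  ∑ k ∈ Finset.range N, (c ^ k / k.factorial) • nbhdSum^[k] g

lemma nbhdExpPartial_apply (c : ℝ) (g : ℤ → ℝ) (N : ℕ) (n : ℤ) :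
    nbhdExpPartial c g N n = ∑ k ∈ Finset.range N, c ^ k / k.factorial * nbhdSum^[k] g n := by
  simp [nbhdExpPartial, Finset.sum_apply]

lemma integral_mul_pow_div_factorial (c s : ℝ) (k : ℕ) :
    ∫ σ in (0 : ℝ)..s, c * ((c * σ) ^ k / k.factorial) = (c * s) ^ (k + 1) / (k + 1).factorial := by
  have hderiv : ∀ σ, HasDerivAt (fun σ => (c * σ) ^ (k + 1) / (k + 1).factorial)
      (c * ((c * σ) ^ k / k.factorial)) σ := fun σ => by
    refine ((((hasDerivAt_id σ).const_mul c).pow (k + 1)).div_const _).congr_deriv ?_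
    rw [Nat.factorial_succ]; push_cast
    field_simp
    simp
  rw [intervalIntegral.integral_eq_sub_of_hasDerivAt (fun σ _ => hderiv σ)
    (by apply Continuous.intervalIntegrable; fun_prop)]
  simp

lemma nbhdExpPartial_picard_step (g : ℤ → ℝ) (K B s : ℝ) (N : ℕ) (n : ℤ) :
    g n + K * ∫ σ in (0 : ℝ)..s,
        nbhdSum (nbhdExpPartial (K * σ) g N + fun _ => (3 * K * σ) ^ N / N.factorial * B) n =
      nbhdExpPartial (K * s) g (N + 1) n + (3 * K * s) ^ (N + 1) / (N + 1).factorial * B := by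
  have hS : ∀ σ, nbhdSum (nbhdExpPartial (K * σ) g N
        + fun _ => (3 * K * σ) ^ N / N.factorial * B) n =
      ∑ k ∈ Finset.range N, (K * σ) ^ k / k.factorial * nbhdSum^[k + 1] g n
        + 3 * ((3 * K * σ) ^ N / N.factorial * B) := fun σ => by
    rw [map_add, nbhdSum_const, nbhdExpPartial, map_sum]
    simp [Finset.sum_apply, Function.iterate_succ_apply']
  have hterm : ∀ k : ℕ, K * ∫ σ in (0 : ℝ)..s, (K * σ) ^ k / k.factorial * nbhdSum^[k + 1] g n =
      (K * s) ^ (k + 1) / (k + 1).factorial * nbhdSum^[k + 1] g n := fun k => by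
    rw [intervalIntegral.integral_mul_const, ← mul_assoc, ← intervalIntegral.integral_const_mul,
      integral_mul_pow_div_factorial]
  have hrem : K * ∫ σ in (0 : ℝ)..s, 3 * ((3 * K * σ) ^ N / N.factorial * B) =
      (3 * K * s) ^ (N + 1) / (N + 1).factorial * B := by
    rw [← integral_mul_pow_div_factorial, ← intervalIntegral.integral_const_mul,
      ← intervalIntegral.integral_mul_const]
    congr 1; ext σ; ring
  simp_rw [hS]
  rw [intervalIntegral.integral_add (by apply Continuous.intervalIntegrable; fun_prop)
      (by apply Continuous.intervalIntegrable; fun_prop),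
    intervalIntegral.integral_finsetSum
      (fun k _ => by apply Continuous.intervalIntegrable; fun_prop),
    mul_add, Finset.mul_sum, Finset.sum_congr rfl fun k _ => hterm k, hrem,
    nbhdExpPartial_apply, Finset.sum_range_succ']
  simp only [Function.iterate_succ, Function.comp_apply, pow_zero, Nat.factorial_zero,
    Nat.cast_one, div_one, Function.iterate_zero, id_eq, one_mul]
  ring

theorem le_nbhdExpPartial_add_of_le_integral {ε : ℝ → ℤ → ℝ} {g : ℤ → ℝ} {K B t : ℝ}
    (hK : 0 ≤ K) (hε : ∀ n, ContinuousOn (ε · n) (Icc 0 t))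
    (hB : ∀ s ∈ Icc 0 t, ∀ n, ε s n ≤ B)
    (hint : ∀ s ∈ Icc 0 t, ∀ n, ε s n ≤ g n + K * ∫ σ in (0 : ℝ)..s, nbhdSum (ε σ) n)
    (N : ℕ) : ∀ s ∈ Icc 0 t, ∀ n,
      ε s n ≤ nbhdExpPartial (K * s) g N n + (3 * K * s) ^ N / N.factorial * B := by
  induction N with
  | zero => simpa [nbhdExpPartial] using hB
  | succ N ih =>
    intro s hs n
    have hsub : uIcc 0 s ⊆ Icc 0 t := by
      rw [uIcc_of_le hs.1]; exact Icc_subset_Icc le_rfl hs.2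
    refine (hint s hs n).trans ?_
    rw [← nbhdExpPartial_picard_step]
    gcongr
    refine intervalIntegral.integral_mono_on hs.1 ?_ ?_ fun σ hσ => nbhdSum_mono ?_ n
    · simp only [nbhdSum_apply]
      exact (((hε _).add (hε _)).add (hε _)).mono hsub |>.intervalIntegrable
    · simp only [nbhdSum_apply, Pi.add_apply, nbhdExpPartial_apply]
      apply Continuous.intervalIntegrable; fun_prop
    · exact fun m => ih σ (Icc_subset_Icc le_rfl hs.2 hσ) m

lemma eLpNorm_le_of_le_add_of_tendsto {α : Type*} [MeasurableSpace α] {μ : Measure α}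
    {p : ℝ≥0∞} {f : α → ℝ} {P δ : ℕ → α → ℝ} {c : ℝ≥0∞} (hf : ∀ x, 0 ≤ f x)
    (hfm : AEStronglyMeasurable f μ) (hPm : ∀ N, AEStronglyMeasurable (P N) μ)
    (hle : ∀ N x, f x ≤ P N x + δ N x) (hδ : ∀ x, Tendsto (δ · x) atTop (𝓝 0))
    (hP : ∀ N, eLpNorm (P N) p μ ≤ c) :
    eLpNorm f p μ ≤ c := by
  -- `f ⊓ P N` is dominated by `P N` and squeezed between `f - |δ N|` and `f`
  refine Lp.eLpNorm_le_of_ae_tendsto (u := atTop) (f := fun N => f ⊓ P N)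
    (.of_forall fun N => ?_) (fun N => hfm.inf (hPm N)) (.of_forall fun x => ?_)
  · refine (eLpNorm_mono fun x => ?_).trans (hP N)
    rw [Real.norm_eq_abs, Real.norm_eq_abs, abs_le]
    exact ⟨le_min (by linarith [abs_nonneg (P N x), hf x]) (neg_abs_le _),
      (min_le_right _ _).trans (le_abs_self _)⟩
  · have hlow : Tendsto (fun N => f x - |δ N x|) atTop (𝓝 (f x)) := by
      simpa using (hδ x).abs.const_sub (f x)
    refine tendsto_of_tendsto_of_tendsto_of_le_of_le hlow tendsto_const_nhds (fun N => ?_)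
      (fun N => min_le_left _ _)
    exact le_min (by linarith [abs_nonneg (δ N x)]) (by linarith [hle N x, le_abs_self (δ N x)])

noncomputable def weightedLpNorm (ω : ℤ → ℝ) (p : ℝ≥0∞) (h : ℤ → ℝ) : ℝ≥0∞ :=
  eLpNorm (fun n => ω n * h n) p Measure.count

namespace weightedLpNorm
variable {ω : ℤ → ℝ} {p : ℝ≥0∞} {C : ℝ}

lemma mono {h h' : ℤ → ℝ} (hh : ∀ n, |h n| ≤ |h' n|) :
    weightedLpNorm ω p h ≤ weightedLpNorm ω p h' :=
  eLpNorm_mono fun n => by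
    simp only [Real.norm_eq_abs, abs_mul]
    exact mul_le_mul_of_nonneg_left (hh n) (abs_nonneg _)

lemma add_le (hp : 1 ≤ p) (h h' : ℤ → ℝ) :
    weightedLpNorm ω p (h + h') ≤ weightedLpNorm ω p h + weightedLpNorm ω p h' := by
  simp only [weightedLpNorm, Pi.add_apply, mul_add]
  exact eLpNorm_add_le .of_discrete .of_discrete hp

lemma sum_le {ι : Type*} (hp : 1 ≤ p) (s : Finset ι) (h : ι → ℤ → ℝ) :
    weightedLpNorm ω p (∑ i ∈ s, h i) ≤ ∑ i ∈ s, weightedLpNorm ω p (h i) := by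
  simp only [weightedLpNorm, Finset.sum_apply, Finset.mul_sum]
  convert eLpNorm_sum_le (μ := Measure.count) (p := p) (s := s) (f := fun i n => ω n * h i n)
    (fun i _ => .of_discrete) hp using 2
  ext n; simp [Finset.sum_apply]

lemma const_smul (c : ℝ) (h : ℤ → ℝ) :
    weightedLpNorm ω p (c • h) = ‖c‖ₑ * weightedLpNorm ω p h := by
  rw [weightedLpNorm, weightedLpNorm, ← eLpNorm_const_smul]
  congr 1; ext n; simp only [Pi.smul_apply, smul_eq_mul]; ring

lemma comp_add_le (hC : 0 ≤ C) (m : ℤ) (hω : ∀ n, |ω n| ≤ C * |ω (n + m)|) (h : ℤ → ℝ) :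
    weightedLpNorm ω p (fun n => h (n + m)) ≤ ENNReal.ofReal C * weightedLpNorm ω p h := by
  calc weightedLpNorm ω p (fun n => h (n + m))
      ≤ eLpNorm (C • ((fun n => ω n * h n) ∘ (· + m))) p Measure.count := by
        refine eLpNorm_mono fun n => ?_
        simp only [Real.norm_eq_abs, abs_mul, Pi.smul_apply, Function.comp_apply, smul_eq_mul,
          abs_of_nonneg hC, ← mul_assoc]
        exact mul_le_mul_of_nonneg_right (hω n) (abs_nonneg _)
    _ = ENNReal.ofReal C * weightedLpNorm ω p h := by
        rw [eLpNorm_const_smul, eLpNorm_comp_measurePreserving .of_discrete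
          (measurePreserving_add_right _ m), Real.enorm_of_nonneg hC]
        rfl

lemma comp_sub_one_le (hC : 0 ≤ C) (hω : ∀ n, |ω (n + 1)| ≤ C * |ω n|) (h : ℤ → ℝ) :
    weightedLpNorm ω p (fun n => h (n - 1)) ≤ ENNReal.ofReal C * weightedLpNorm ω p h := by
  simpa only [sub_eq_add_neg] using comp_add_le hC (-1) (fun n => by simpa using hω (n + -1)) h

lemma nbhdSum_le (hp : 1 ≤ p) (hC : 0 ≤ C) (hω₁ : ∀ n, |ω n| ≤ C * |ω (n + 1)|)
    (hω₂ : ∀ n, |ω (n + 1)| ≤ C * |ω n|) (h : ℤ → ℝ) :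
    weightedLpNorm ω p (nbhdSum h) ≤ ENNReal.ofReal (2 * C + 1) * weightedLpNorm ω p h := by
  calc weightedLpNorm ω p (nbhdSum h)
      ≤ ENNReal.ofReal C * weightedLpNorm ω p h + weightedLpNorm ω p h
          + ENNReal.ofReal C * weightedLpNorm ω p h := by
        refine (add_le hp (fun n => h (n - 1) + h n) _).trans
          (add_le_add ((add_le hp _ _).trans ?_) (comp_add_le hC 1 hω₁ h))
        exact add_le_add_left (comp_sub_one_le hC hω₂ h) _
    _ = ENNReal.ofReal (2 * C + 1) * weightedLpNorm ω p h := by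
        rw [ENNReal.ofReal_add (by positivity) zero_le_one, ENNReal.ofReal_mul zero_le_two]
        simp only [ENNReal.ofReal_ofNat, ENNReal.ofReal_one]
        ring

lemma nbhdSum_iterate_le (hp : 1 ≤ p) (hC : 0 ≤ C) (hω₁ : ∀ n, |ω n| ≤ C * |ω (n + 1)|)
    (hω₂ : ∀ n, |ω (n + 1)| ≤ C * |ω n|) (h : ℤ → ℝ) (k : ℕ) :
    weightedLpNorm ω p (nbhdSum^[k] h) ≤ ENNReal.ofReal (2 * C + 1) ^ k * weightedLpNorm ω p h := by
  induction k with
  | zero => simp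
  | succ k ih =>
    rw [Function.iterate_succ_apply', pow_succ', mul_assoc]
    exact (nbhdSum_le hp hC hω₁ hω₂ _).trans (mul_le_mul_right ih _)

lemma nbhdExpPartial_le (hp : 1 ≤ p) (hC : 0 ≤ C) (hω₁ : ∀ n, |ω n| ≤ C * |ω (n + 1)|)
    (hω₂ : ∀ n, |ω (n + 1)| ≤ C * |ω n|) {c : ℝ} (hc : 0 ≤ c) (g : ℤ → ℝ) (N : ℕ) :
    weightedLpNorm ω p (nbhdExpPartial c g N) ≤
      ENNReal.ofReal (Real.exp (c * (2 * C + 1))) * weightedLpNorm ω p g := by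
  calc weightedLpNorm ω p (nbhdExpPartial c g N)
      ≤ ∑ k ∈ Finset.range N, ENNReal.ofReal ((c * (2 * C + 1)) ^ k / k.factorial)
          * weightedLpNorm ω p g := by
        refine (sum_le hp _ _).trans (Finset.sum_le_sum fun k _ => ?_)
        rw [const_smul, Real.enorm_of_nonneg (by positivity), mul_pow, mul_div_right_comm,
          ENNReal.ofReal_mul (by positivity), ENNReal.ofReal_pow (by positivity), mul_assoc]
        exact mul_le_mul_right (nbhdSum_iterate_le hp hC hω₁ hω₂ g k) _
    _ ≤ ENNReal.ofReal (Real.exp (c * (2 * C + 1))) * weightedLpNorm ω p g := by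
        rw [← Finset.sum_mul, ← ENNReal.ofReal_sum_of_nonneg (fun k _ => by positivity)]
        gcongr
        exact Real.sum_le_exp_of_nonneg (by positivity) N

theorem le_of_le_nbhdExpPartial_add (hp : 1 ≤ p) (hC : 0 ≤ C) (hω₀ : ∀ n, 0 ≤ ω n)
    (hω₁ : ∀ n, |ω n| ≤ C * |ω (n + 1)|) (hω₂ : ∀ n, |ω (n + 1)| ≤ C * |ω n|) {f g : ℤ → ℝ}
    {c B : ℝ} (hc : 0 ≤ c) (hf : ∀ n, 0 ≤ f n)
    (hfg : ∀ N n, f n ≤ nbhdExpPartial c g N n + (3 * c) ^ N / N.factorial * B) :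
    weightedLpNorm ω p f ≤ ENNReal.ofReal (Real.exp (c * (2 * C + 1))) * weightedLpNorm ω p g := by
  refine eLpNorm_le_of_le_add_of_tendsto (P := fun N n => ω n * nbhdExpPartial c g N n)
    (δ := fun N n => ω n * ((3 * c) ^ N / N.factorial * B)) (fun n => mul_nonneg (hω₀ n) (hf n))
    .of_discrete (fun _ => .of_discrete) (fun N n => ?_) (fun n => ?_)
    (fun N => nbhdExpPartial_le hp hC hω₁ hω₂ hc g N)
  · rw [← mul_add]; exact mul_le_mul_of_nonneg_left (hfg N n) (hω₀ n)
  · simpa using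
      ((FloorSemiring.tendsto_pow_div_factorial_atTop (3 * c)).mul_const B).const_mul (ω n)

end weightedLpNorm

/-- The scaling that turns `wnorm2 w p` into an unweighted `ℓᵖ` norm: `w ^ (1 / p)` for `p < ∞`,
but `w` itself for `p = ∞`. -/
noncomputable def lpWeight (w : ℤ → ℝ) (p : ℝ≥0∞) (n : ℤ) : ℝ :=
  if p = ∞ then w n else w n ^ p.toReal⁻¹

section lpWeight
variable {w : ℤ → ℝ} {p : ℝ≥0∞}

lemma lpWeight_nonneg (hw : ∀ n, 0 ≤ w n) (n : ℤ) : 0 ≤ lpWeight w p n := by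
  unfold lpWeight; split_ifs
  · exact hw n
  · exact Real.rpow_nonneg (hw n) _

lemma lpWeight_le_mul (hp : 1 ≤ p) {C : ℝ} (hC : 1 ≤ C) {m n : ℤ} (hm : 0 ≤ w m) (hn : 0 ≤ w n)
    (h : w m ≤ C * w n) : lpWeight w p m ≤ C * lpWeight w p n := by
  unfold lpWeight; split_ifs with hpt
  · exact h
  have hq : 1 ≤ p.toReal := by
    rw [← ENNReal.toReal_one]; exact ENNReal.toReal_mono hpt hp
  calc w m ^ p.toReal⁻¹ ≤ (C * w n) ^ p.toReal⁻¹ := by gcongr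
    _ = C ^ p.toReal⁻¹ * w n ^ p.toReal⁻¹ := Real.mul_rpow (by linarith) hn
    _ ≤ C * w n ^ p.toReal⁻¹ := by
        gcongr
        exact Real.rpow_le_self_of_one_le hC (inv_le_one_of_one_le₀ hq)

lemma lpWeight_le_max_mul (hp : 1 ≤ p) (hw : ∀ n, 0 < w n) {C : ℝ}
    (hC : ∀ n, w (n + 1) / w n + w n / w (n + 1) ≤ C) (n : ℤ) :
    lpWeight w p n ≤ max C 1 * lpWeight w p (n + 1) ∧
      lpWeight w p (n + 1) ≤ max C 1 * lpWeight w p n := by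
  have hle : ∀ m k, w m / w k ≤ C → w m ≤ max C 1 * w k := fun m k h => by
    rw [div_le_iff₀ (hw k)] at h
    exact h.trans (mul_le_mul_of_nonneg_right (le_max_left _ _) (hw k).le)
  have hpos := div_pos (hw n) (hw (n + 1))
  have hpos' := div_pos (hw (n + 1)) (hw n)
  exact ⟨lpWeight_le_mul hp (le_max_right _ _) (hw _).le (hw _).le (hle _ _ (by linarith [hC n])),
    lpWeight_le_mul hp (le_max_right _ _) (hw _).le (hw _).le (hle _ _ (by linarith [hC n]))⟩

lemma weightedLpNorm_lpWeight_top (hw : ∀ n, 0 ≤ w n) (h : ℤ → ℝ) :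
    weightedLpNorm (lpWeight w ∞) ∞ h = ⨆ n, ENNReal.ofReal (w n * |h n|) := by
  simp only [weightedLpNorm, lpWeight, if_true, eLpNorm_exponent_top,
    eLpNormEssSup_eq_essSup_enorm, essSup_count, Real.enorm_eq_ofReal_abs, abs_mul,
    abs_of_nonneg (hw _)]

lemma weightedLpNorm_lpWeight_of_ne_top (hw : ∀ n, 0 ≤ w n) (hp0 : p ≠ 0) (hp : p ≠ ∞)
    (h : ℤ → ℝ) : weightedLpNorm (lpWeight w p) p h =
      (∑' n, ENNReal.ofReal (w n * |h n| ^ p.toReal)) ^ (1 / p.toReal) := by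
  have hq : p.toReal ≠ 0 := (ENNReal.toReal_pos hp0 hp).ne'
  rw [weightedLpNorm, eLpNorm_eq_lintegral_rpow_enorm_toReal hp0 hp, lintegral_count]
  congr 2; ext n
  rw [Real.enorm_eq_ofReal_abs, ENNReal.ofReal_rpow_of_nonneg (abs_nonneg _) ENNReal.toReal_nonneg,
    lpWeight, if_neg hp, abs_mul, abs_of_nonneg (Real.rpow_nonneg (hw n) _),
    Real.mul_rpow (Real.rpow_nonneg (hw n) _) (abs_nonneg _), Real.rpow_inv_rpow (hw n) hq]

lemma weightedLpNorm_lpWeight_le_wnorm2 (hw : ∀ n, 0 ≤ w n) (f g : ℤ → ℝ) :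
    weightedLpNorm (lpWeight w p) p f ≤ wnorm2 w p f g := by
  rcases eq_or_ne p 0 with rfl | hp0
  · simp [weightedLpNorm]
  unfold wnorm2; split_ifs with hp
  · subst hp
    rw [weightedLpNorm_lpWeight_top hw]
    gcongr with n
    exacts [hw n, le_add_of_nonneg_right (abs_nonneg _)]
  · rw [weightedLpNorm_lpWeight_of_ne_top hw hp0 hp]
    gcongr with n
    exacts [hw n, le_add_of_nonneg_right (by positivity)]

lemma wnorm2_comm (w : ℤ → ℝ) (p : ℝ≥0∞) (f g : ℤ → ℝ) : wnorm2 w p f g = wnorm2 w p g f := by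
  simp only [wnorm2, add_comm]

lemma wnorm2_le_weightedLpNorm_lpWeight (hw : ∀ n, 0 ≤ w n) (hp : 1 ≤ p) (f g : ℤ → ℝ) :
    wnorm2 w p f g ≤ weightedLpNorm (lpWeight w p) p (fun n => |f n| + |g n|) := by
  have hp0 : p ≠ 0 := (zero_lt_one.trans_le hp).ne'
  unfold wnorm2; split_ifs with hpt
  · subst hpt
    rw [weightedLpNorm_lpWeight_top hw]
    simp only [abs_of_nonneg (add_nonneg (abs_nonneg (f _)) (abs_nonneg (g _))), le_refl]
  · rw [weightedLpNorm_lpWeight_of_ne_top hw hp0 hpt]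
    have hq : 1 ≤ p.toReal := by
      rw [← ENNReal.toReal_one]; exact ENNReal.toReal_mono hpt hp
    gcongr with n
    · exact hw n
    · rw [abs_of_nonneg (add_nonneg (abs_nonneg (f n)) (abs_nonneg (g n)))]
      exact Real.add_rpow_le_rpow_add (abs_nonneg _) (abs_nonneg _) hq

theorem weightedLpNorm_lpWeight_ne_top_iff (hw : ∀ n, 0 ≤ w n) (hp : 1 ≤ p) (f g : ℤ → ℝ) :
    weightedLpNorm (lpWeight w p) p (fun n => |f n| + |g n|) ≠ ∞ ↔ wnorm2 w p f g ≠ ∞ := by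
  refine ⟨fun h => ne_top_of_le_ne_top h (wnorm2_le_weightedLpNorm_lpWeight hw hp f g),
    fun h => ne_top_of_le_ne_top (ENNReal.add_ne_top.2 ⟨h, h⟩)
      ((weightedLpNorm.add_le hp (fun n => |f n|) _).trans ?_)⟩
  have habs : ∀ u : ℤ → ℝ, weightedLpNorm (lpWeight w p) p (fun n => |u n|) =
      weightedLpNorm (lpWeight w p) p u := fun u =>
    le_antisymm (weightedLpNorm.mono fun n => (abs_abs _).le)
      (weightedLpNorm.mono fun n => (abs_abs _).ge)
  rw [habs, habs]
  exact add_le_add (weightedLpNorm_lpWeight_le_wnorm2 hw f g)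
    (wnorm2_comm w p f g ▸ weightedLpNorm_lpWeight_le_wnorm2 hw g f)

end lpWeight

def siteDist (x y x' y' : ℤ → ℝ) (n : ℤ) : ℝ := |x n - x' n| + |y n - y' n|

lemma siteDist_nonneg (x y x' y' : ℤ → ℝ) (n : ℤ) : 0 ≤ siteDist x y x' y' n := by
  unfold siteDist; positivity

lemma siteDist_neg (x y x' y' : ℤ → ℝ) :
    siteDist x (fun n => -y n) x' (fun n => -y' n) = siteDist x y x' y' := by
  ext n; simp only [siteDist, ← neg_sub', abs_neg]

lemma abs_sub_le_of_hasDerivAt {f f' : ℝ → ℝ} (hf : ∀ σ, HasDerivAt f (f' σ) σ)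
    (hf' : Continuous f') {s : ℝ} (hs : 0 ≤ s) (c : ℝ) :
    |f s - c| ≤ |f 0 - c| + ∫ σ in (0 : ℝ)..s, |f' σ| := by
  have hftc := intervalIntegral.integral_eq_sub_of_hasDerivAt (fun σ _ => hf σ)
    (hf'.intervalIntegrable 0 s)
  calc |f s - c| = |(f 0 - c) + ∫ σ in (0 : ℝ)..s, f' σ| := by rw [hftc]; ring_nf
    _ ≤ |f 0 - c| + |∫ σ in (0 : ℝ)..s, f' σ| := abs_add_le _ _
    _ ≤ |f 0 - c| + ∫ σ in (0 : ℝ)..s, |f' σ| := by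
        gcongr; exact intervalIntegral.abs_integral_le_integral_abs hs

lemma siteDist_succ_le (x y x₀ y₀ : ℤ → ℝ) (m : ℤ) :
    siteDist (fun k => x (k + 1)) (fun k => y (k + 1)) x y m ≤
      siteDist x y x₀ y₀ (m + 1) + siteDist x y x₀ y₀ m
        + siteDist (fun k => x₀ (k + 1)) (fun k => y₀ (k + 1)) x₀ y₀ m := by
  simp only [siteDist]
  linarith [abs_sub_le (x (m + 1)) (x₀ (m + 1)) (x m), abs_sub_le (x₀ (m + 1)) (x₀ m) (x m),
    abs_sub_le (y (m + 1)) (y₀ (m + 1)) (y m), abs_sub_le (y₀ (m + 1)) (y₀ m) (y m),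
    abs_sub_comm (x₀ m) (x m), abs_sub_comm (y₀ m) (y m)]

lemma toda_vectorField_abs_le {x y x₀ y₀ : ℤ → ℝ} {M : ℝ} (hM : ∀ m, |x m| + |y m| ≤ M)
    (n : ℤ) : |x n * (y (n + 1) - y n)| + |2 * (x n ^ 2 - x (n - 1) ^ 2)| ≤
      5 * M * (nbhdSum (siteDist x y x₀ y₀) n
        + (siteDist (fun m => x₀ (m + 1)) (fun m => y₀ (m + 1)) x₀ y₀ n
          + siteDist (fun m => x₀ (m + 1)) (fun m => y₀ (m + 1)) x₀ y₀ (n - 1))) := by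
  set E := siteDist x y x₀ y₀
  set D := siteDist (fun m => x₀ (m + 1)) (fun m => y₀ (m + 1)) x₀ y₀
  have hx : ∀ m, |x m| ≤ M := fun m => by linarith [hM m, abs_nonneg (y m)]
  have hM0 : 0 ≤ M := (abs_nonneg _).trans (hx 0)
  have hy_diff : |y (n + 1) - y n| ≤ E (n + 1) + E n + D n :=
    (le_add_of_nonneg_left (abs_nonneg _)).trans (siteDist_succ_le x y x₀ y₀ n)
  have hx_diff : |x n - x (n - 1)| ≤ E n + E (n - 1) + D (n - 1) := by
    have h := (le_add_of_nonneg_right (abs_nonneg _)).trans (siteDist_succ_le x y x₀ y₀ (n - 1))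
    simp only [sub_add_cancel] at h
    exact h
  have hx_sum : |x n + x (n - 1)| ≤ 2 * M := by
    linarith [abs_add_le (x n) (x (n - 1)), hx n, hx (n - 1)]
  have hE0 : ∀ m, 0 ≤ E m := siteDist_nonneg _ _ _ _
  have hD0 : ∀ m, 0 ≤ D m := siteDist_nonneg _ _ _ _
  have ha : |x n * (y (n + 1) - y n)| ≤ M * (E (n + 1) + E n + D n) := by
    rw [abs_mul]; exact mul_le_mul (hx n) hy_diff (abs_nonneg _) hM0
  have hb : |2 * (x n ^ 2 - x (n - 1) ^ 2)| ≤ 2 * (2 * M) * (E n + E (n - 1) + D (n - 1)) := by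
    rw [show x n ^ 2 - x (n - 1) ^ 2 = (x n + x (n - 1)) * (x n - x (n - 1)) by ring,
      abs_mul, abs_mul, abs_two, mul_assoc]
    gcongr
  rw [nbhdSum_apply]
  nlinarith [mul_nonneg hM0 (hE0 (n - 1)), mul_nonneg hM0 (hE0 n), mul_nonneg hM0 (hE0 (n + 1)),
    mul_nonneg hM0 (hD0 n), mul_nonneg hM0 (hD0 (n - 1))]

structure IsTodaSolution (a b : ℝ → ℤ → ℝ) : Prop where
  hasDerivAt_a : ∀ t n, HasDerivAt (fun s => a s n) (a t n * (b t (n + 1) - b t n)) t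
  hasDerivAt_b : ∀ t n, HasDerivAt (fun s => b s n) (2 * (a t n ^ 2 - a t (n - 1) ^ 2)) t

namespace IsTodaSolution
variable {a b : ℝ → ℤ → ℝ}

lemma continuous_a (hab : IsTodaSolution a b) (n : ℤ) : Continuous fun s => a s n :=
  continuous_iff_continuousAt.2 fun s => (hab.hasDerivAt_a s n).continuousAt

lemma continuous_b (hab : IsTodaSolution a b) (n : ℤ) : Continuous fun s => b s n :=
  continuous_iff_continuousAt.2 fun s => (hab.hasDerivAt_b s n).continuousAt

lemma timeReversal (hab : IsTodaSolution a b) :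
    IsTodaSolution (fun s => a (-s)) (fun s n => -b (-s) n) where
  hasDerivAt_a t n := by
    refine ((hab.hasDerivAt_a (-t) n).comp t (hasDerivAt_neg t)).congr_deriv ?_
    ring
  hasDerivAt_b t n := by
    refine ((hab.hasDerivAt_b (-t) n).comp t (hasDerivAt_neg t)).neg.congr_deriv ?_
    ring

theorem siteDist_le_integral (hab : IsTodaSolution a b) (a₀ b₀ : ℤ → ℝ) {t M : ℝ}
    (hM : ∀ s ∈ Icc 0 t, ∀ n, |a s n| + |b s n| ≤ M) :
    ∀ s ∈ Icc 0 t, ∀ n, siteDist (a s) (b s) a₀ b₀ n ≤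
      (siteDist (a 0) (b 0) a₀ b₀ n + 5 * M * t *
        (siteDist (fun m => a₀ (m + 1)) (fun m => b₀ (m + 1)) a₀ b₀ n
          + siteDist (fun m => a₀ (m + 1)) (fun m => b₀ (m + 1)) a₀ b₀ (n - 1)))
      + 5 * M * ∫ σ in (0 : ℝ)..s, nbhdSum (siteDist (a σ) (b σ) a₀ b₀) n := by
  intro s hs n
  set D := siteDist (fun m => a₀ (m + 1)) (fun m => b₀ (m + 1)) a₀ b₀
  set E := fun σ => nbhdSum (siteDist (a σ) (b σ) a₀ b₀) n
  have hM0 : 0 ≤ M := (by positivity : (0 : ℝ) ≤ |a 0 0| + |b 0 0|).trans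
    (hM 0 ⟨le_rfl, hs.1.trans hs.2⟩ 0)
  have hD0 : 0 ≤ D n + D (n - 1) :=
    add_nonneg (siteDist_nonneg _ _ _ _ _) (siteDist_nonneg _ _ _ _ _)
  have hca := hab.continuous_a
  have hcb := hab.continuous_b
  have hfa : Continuous fun σ => a σ n * (b σ (n + 1) - b σ n) := by fun_prop
  have hfb : Continuous fun σ => 2 * (a σ n ^ 2 - a σ (n - 1) ^ 2) := by fun_prop
  have hcE : Continuous E := by simp only [E, nbhdSum_apply, siteDist]; fun_prop
  have hbound : ∫ σ in (0 : ℝ)..s, |a σ n * (b σ (n + 1) - b σ n)|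
      + |2 * (a σ n ^ 2 - a σ (n - 1) ^ 2)| ≤
      ∫ σ in (0 : ℝ)..s, 5 * M * (E σ + (D n + D (n - 1))) :=
    intervalIntegral.integral_mono_on hs.1 (by apply Continuous.intervalIntegrable; fun_prop)
      (by apply Continuous.intervalIntegrable; fun_prop)
      fun σ hσ => toda_vectorField_abs_le (hM σ (Icc_subset_Icc le_rfl hs.2 hσ)) n
  have hrhs : ∫ σ in (0 : ℝ)..s, 5 * M * (E σ + (D n + D (n - 1))) =
      5 * M * (∫ σ in (0 : ℝ)..s, E σ) + s * (5 * M * (D n + D (n - 1))) := by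
    simp_rw [mul_add]
    rw [intervalIntegral.integral_add ((hcE.const_mul _).intervalIntegrable _ _)
      intervalIntegrable_const, intervalIntegral.integral_const_mul,
      intervalIntegral.integral_const, sub_zero, smul_eq_mul]
    ring
  rw [intervalIntegral.integral_add (hfa.abs.intervalIntegrable _ _)
    (hfb.abs.intervalIntegrable _ _), hrhs] at hbound
  have ha := abs_sub_le_of_hasDerivAt (hab.hasDerivAt_a · n) hfa hs.1 (a₀ n)
  have hb := abs_sub_le_of_hasDerivAt (hab.hasDerivAt_b · n) hfb hs.1 (b₀ n)
  have hst : s * (5 * M * (D n + D (n - 1))) ≤ t * (5 * M * (D n + D (n - 1))) :=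
    mul_le_mul_of_nonneg_right hs.2 (by positivity)
  simp only [siteDist] at ha hb ⊢
  linarith

theorem weightedLpNorm_siteDist_le (hab : IsTodaSolution a b) {ω : ℤ → ℝ} {p : ℝ≥0∞} {C : ℝ}
    (hp : 1 ≤ p) (hC : 0 ≤ C) (hω₀ : ∀ n, 0 ≤ ω n) (hω₁ : ∀ n, ω n ≤ C * ω (n + 1))
    (hω₂ : ∀ n, ω (n + 1) ≤ C * ω n) {a₀ b₀ : ℤ → ℝ} {M₀ : ℝ}
    (hM₀ : ∀ n, |a₀ n| + |b₀ n| ≤ M₀) {t M : ℝ} (ht : 0 ≤ t)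
    (hM : ∀ s ∈ Icc 0 t, ∀ n, |a s n| + |b s n| ≤ M) :
    weightedLpNorm ω p (siteDist (a t) (b t) a₀ b₀) ≤
      ENNReal.ofReal (Real.exp (5 * M * t * (2 * C + 1))) *
        (weightedLpNorm ω p (siteDist (a 0) (b 0) a₀ b₀) + ENNReal.ofReal (5 * M * t) *
          ((1 + ENNReal.ofReal C) *
            weightedLpNorm ω p (siteDist (fun m => a₀ (m + 1)) (fun m => b₀ (m + 1)) a₀ b₀))) := by
  set D := siteDist (fun m => a₀ (m + 1)) (fun m => b₀ (m + 1)) a₀ b₀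
  have hM0 : 0 ≤ M := (by positivity : (0 : ℝ) ≤ |a 0 0| + |b 0 0|).trans
    (hM 0 ⟨le_rfl, ht⟩ 0)
  have h₁ : ∀ n, |ω n| ≤ C * |ω (n + 1)| := fun n => by
    rw [abs_of_nonneg (hω₀ _), abs_of_nonneg (hω₀ _)]; exact hω₁ n
  have h₂ : ∀ n, |ω (n + 1)| ≤ C * |ω n| := fun n => by
    rw [abs_of_nonneg (hω₀ _), abs_of_nonneg (hω₀ _)]; exact hω₂ n
  have hca := hab.continuous_a
  have hcb := hab.continuous_b
  have hpicard := le_nbhdExpPartial_add_of_le_integral (ε := fun s => siteDist (a s) (b s) a₀ b₀)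
    (g := siteDist (a 0) (b 0) a₀ b₀ + (5 * M * t) • (D + fun n => D (n - 1)))
    (K := 5 * M) (B := M + M₀) (by positivity)
    (fun n => by simp only [siteDist]; fun_prop)
    (fun s hs n => by
      simp only [siteDist]
      linarith [abs_sub (a s n) (a₀ n), abs_sub (b s n) (b₀ n), hM s hs n, hM₀ n])
    (hab.siteDist_le_integral a₀ b₀ hM)
  refine (weightedLpNorm.le_of_le_nbhdExpPartial_add (c := 5 * M * t) hp hC hω₀ h₁ h₂
    (by positivity) (siteDist_nonneg _ _ _ _) fun N n => by
      rw [show 3 * (5 * M * t) = 3 * (5 * M) * t by ring]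
      exact hpicard N t ⟨ht, le_rfl⟩ n).trans ?_
  gcongr
  refine (weightedLpNorm.add_le hp _ _).trans (add_le_add le_rfl ?_)
  rw [weightedLpNorm.const_smul, Real.enorm_of_nonneg (by positivity), add_mul, one_mul]
  gcongr
  refine (weightedLpNorm.add_le hp _ _).trans (add_le_add le_rfl ?_)
  exact weightedLpNorm.comp_sub_one_le hC h₂ D

theorem weightedLpNorm_siteDist_ne_top (hab : IsTodaSolution a b) {ω : ℤ → ℝ} {p : ℝ≥0∞}
    {C : ℝ} (hp : 1 ≤ p) (hC : 0 ≤ C) (hω₀ : ∀ n, 0 ≤ ω n) (hω₁ : ∀ n, ω n ≤ C * ω (n + 1))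
    (hω₂ : ∀ n, ω (n + 1) ≤ C * ω n) {a₀ b₀ : ℤ → ℝ} {M₀ : ℝ}
    (hM₀ : ∀ n, |a₀ n| + |b₀ n| ≤ M₀) {t M : ℝ}
    (hM : ∀ s ∈ uIcc 0 t, ∀ n, |a s n| + |b s n| ≤ M)
    (hε₀ : weightedLpNorm ω p (siteDist (a 0) (b 0) a₀ b₀) ≠ ∞)
    (hD : weightedLpNorm ω p (siteDist (fun m => a₀ (m + 1)) (fun m => b₀ (m + 1)) a₀ b₀) ≠ ∞) :
    weightedLpNorm ω p (siteDist (a t) (b t) a₀ b₀) ≠ ∞ := by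
  rcases le_total 0 t with ht | ht
  · refine ne_top_of_le_ne_top ?_ (hab.weightedLpNorm_siteDist_le hp hC hω₀ hω₁ hω₂ hM₀ ht
      fun s hs => hM s (Icc_subset_uIcc hs))
    finiteness
  · have hrev := hab.timeReversal.weightedLpNorm_siteDist_le (b₀ := fun n => -b₀ n) (t := -t)
      hp hC hω₀ hω₁ hω₂ (by simpa only [abs_neg] using hM₀) (neg_nonneg.2 ht)
      fun s hs n => by
        have hs' : -s ∈ uIcc 0 t := by
          rw [uIcc_of_ge ht]; exact ⟨by linarith [hs.2], by linarith [hs.1]⟩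
        simpa only [abs_neg] using hM (-s) hs' n
    simp only [neg_neg, neg_zero, siteDist_neg] at hrev
    refine ne_top_of_le_ne_top ?_ hrev
    finiteness

end IsTodaSolution

theorem toda_preservation_of_spatial_asymptotics_general
    (w : ℤ → ℝ) (hw1 : ∀ n, 1 ≤ w n)
    (hw2 : ∃ C : ℝ, ∀ n, w (n + 1) / w n + w n / w (n + 1) ≤ C)
    (p : ℝ≥0∞) (hp : 1 ≤ p)
    (a₀ b₀ ta₀ tb₀ : ℤ → ℝ)
    (ha₀bdd : ∃ C, ∀ n, |a₀ n| + |b₀ n| ≤ C)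
    (h₀ : wnorm2 w p (fun n => a₀ (n + 1) - a₀ n) (fun n => b₀ (n + 1) - b₀ n) ≠ ∞)
    (ht₀ : wnorm2 w p ta₀ tb₀ ≠ ∞)
    (a b : ℝ → ℤ → ℝ)
    (hbdd : ∀ T : ℝ, ∃ C, ∀ t ∈ Set.Icc (-T) T, ∀ n, |a t n| + |b t n| ≤ C)
    (toda_a : ∀ t n, HasDerivAt (fun s => a s n) (a t n * (b t (n + 1) - b t n)) t)
    (toda_b : ∀ t n, HasDerivAt (fun s => b s n)
      (2 * ((a t n) ^ 2 - (a t (n - 1)) ^ 2)) t)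
    (hinit_a : ∀ n, a 0 n = a₀ n + ta₀ n)
    (hinit_b : ∀ n, b 0 n = b₀ n + tb₀ n) :
    ∀ t, wnorm2 w p (fun n => a t n - a₀ n) (fun n => b t n - b₀ n) ≠ ∞ := by
  intro t
  obtain ⟨C, hC⟩ := hw2
  obtain ⟨M₀, hM₀⟩ := ha₀bdd
  obtain ⟨M, hM⟩ := hbdd |t|
  have hw : ∀ n, 0 < w n := fun n => zero_lt_one.trans_le (hw1 n)
  have hω := lpWeight_le_max_mul hp hw hC
  have hconv := weightedLpNorm_lpWeight_ne_top_iff (fun n => (hw n).le) hp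
  have hinit : siteDist (a 0) (b 0) a₀ b₀ = fun n => |ta₀ n| + |tb₀ n| := by
    ext n; simp only [siteDist, hinit_a, hinit_b, add_sub_cancel_left]
  rw [← hconv]
  exact IsTodaSolution.weightedLpNorm_siteDist_ne_top ⟨toda_a, toda_b⟩ hp
    (zero_le_one.trans (le_max_right _ _)) (lpWeight_nonneg fun n => (hw n).le)
    (fun n => (hω n).1) (fun n => (hω n).2) hM₀
    (fun s hs => hM s (uIcc_subset_Icc ⟨neg_nonpos.2 (abs_nonneg t), abs_nonneg t⟩
      ⟨neg_abs_le t, le_abs_self t⟩ hs))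
    (hinit ▸ (hconv _ _).2 ht₀) ((hconv _ _).2 h₀)

/-- Main theorem: preservation of spatial asymptotics: with
`‖(a₀⁺−a₀, b₀⁺−b₀)‖_{w,p} < ∞` and `‖(ã₀, b̃₀)‖_{w,p} < ∞`, the bounded Toda solution
with `a(0) = a₀ + ã₀ ≠ 0`, `b(0) = b₀ + b̃₀` satisfies `a(t) = a₀ + ã(t)`,
`b(t) = b₀ + b̃(t)` with `‖(ã(t), b̃(t))‖_{w,p} < ∞` for all `t`. -/
theorem toda_preservation_of_spatial_asymptotics
    (w : ℤ → ℝ) (hw1 : ∀ n, 1 ≤ w n)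
    (hw2 : ∃ C : ℝ, ∀ n, w (n + 1) / w n + w n / w (n + 1) ≤ C)
    (p : ℝ≥0∞) (hp : 1 ≤ p)
    (a₀ b₀ ta₀ tb₀ : ℤ → ℝ)
    (ha₀bdd : ∃ C, ∀ n, |a₀ n| + |b₀ n| ≤ C)
    (hta₀bdd : ∃ C, ∀ n, |ta₀ n| + |tb₀ n| ≤ C)
    (h₀ : wnorm2 w p (fun n => a₀ (n + 1) - a₀ n) (fun n => b₀ (n + 1) - b₀ n) ≠ ∞)
    (ht₀ : wnorm2 w p ta₀ tb₀ ≠ ∞)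
    (a b : ℝ → ℤ → ℝ)
    (hbdd : ∀ T : ℝ, ∃ C, ∀ t ∈ Set.Icc (-T) T, ∀ n, |a t n| + |b t n| ≤ C)
    (toda_a : ∀ t n, HasDerivAt (fun s => a s n) (a t n * (b t (n + 1) - b t n)) t)
    (toda_b : ∀ t n, HasDerivAt (fun s => b s n)
      (2 * ((a t n) ^ 2 - (a t (n - 1)) ^ 2)) t)
    (hinit_a : ∀ n, a 0 n = a₀ n + ta₀ n)
    (hinit_b : ∀ n, b 0 n = b₀ n + tb₀ n)
    (hinit_ne : ∀ n, a 0 n ≠ 0) :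
    ∀ t, wnorm2 w p (fun n => a t n - a₀ n) (fun n => b t n - b₀ n) ≠ ∞ :=
  toda_preservation_of_spatial_asymptotics_general w hw1 hw2 p hp a₀ b₀ ta₀ tb₀ ha₀bdd h₀ ht₀ a b
    hbdd toda_a toda_b hinit_a hinit_b
end

section
/- Short-range persistence (Lemma): If (a(t), b(t)) is a bounded Toda solution and Σ_n w(n)(|a(n,t₀) − 1/2| + |b(n,t₀)|) < ∞ for one t₀, where w(n) ≥ 1 satisfies sup_n(w(n+1)/w(n) + w(n)/w(n+1)) < ∞, then Σ_n w(n)(|a(n,t) − 1/2| + |b(n,t)|) < ∞ for all t ∈ ℝ. -/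
/-!
Write `u n t = |a t n - 1/2| + |b t n|` for the deviation from the free solution. On a time
interval `J` on which `|a|, |b| ≤ C`, the Toda equations give
`|u̇ n| ≤ 5 C (u (n-1) + u n + u (n+1))`, so the suprema `M n = sup_J u n` satisfy
`M ≤ u s₀ + ε (M (· - 1) + M + M (· + 1))` with `ε = 5 C |J|`. If `w (n ± 1) ≤ c w n`, a shift
costs at most a factor `c` in the `w`-weighted `ℓ¹` norm, so for `ε (1 + 2c) ≤ 1/2` the
`ε`-term can be absorbed: `‖M‖_w ≤ 2 ‖u s₀‖_w`. Absorbing needs `‖M‖_w < ∞` beforehand, so it is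
done with the summable weights `min (w n) (R / 2^|n|)`, which obey the same ratio bound, and
`R → ∞` afterwards. Hence weighted summability of `u t` is locally constant in `t`, so constant
on `ℝ`.
-/

open Set Filter Topology

def HasBoundedRatio (c : ℝ) (v : ℤ → ℝ) : Prop :=
  ∀ n, v (n + 1) ≤ c * v n ∧ v n ≤ c * v (n + 1)

lemma summable_and_tsum_mul_shift_le {v M : ℤ → ℝ} {c : ℝ} (k : ℤ) (hv : ∀ n, 0 ≤ v n)
    (hM : ∀ n, 0 ≤ M n) (hvM : Summable fun n => v n * M n) (hk : ∀ n, v n ≤ c * v (n + k)) :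
    (Summable fun n => v n * M (n + k)) ∧ ∑' n, v n * M (n + k) ≤ c * ∑' n, v n * M n := by
  have hshift : Summable fun n => c * (v (n + k) * M (n + k)) :=
    (hvM.comp_injective (add_left_injective k)).mul_left c
  have hle : ∀ n, v n * M (n + k) ≤ c * (v (n + k) * M (n + k)) := fun n => by
    rw [← mul_assoc]; exact mul_le_mul_of_nonneg_right (hk n) (hM _)
  have hsum : Summable fun n => v n * M (n + k) :=
    hshift.of_nonneg_of_le (fun n => mul_nonneg (hv n) (hM _)) hle
  refine ⟨hsum, (hsum.tsum_le_tsum hle hshift).trans_eq ?_⟩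
  rw [tsum_mul_left]
  exact congrArg (c * ·) ((Equiv.addRight k).tsum_eq fun n => v n * M n)

namespace HasBoundedRatio

variable {c : ℝ} {v : ℤ → ℝ}

lemma mono {c' : ℝ} (h : HasBoundedRatio c v) (hv : ∀ n, 0 ≤ v n) (hcc' : c ≤ c') :
    HasBoundedRatio c' v := fun n =>
  ⟨(h n).1.trans (mul_le_mul_of_nonneg_right hcc' (hv n)),
    (h n).2.trans (mul_le_mul_of_nonneg_right hcc' (hv (n + 1)))⟩

lemma min {v' : ℤ → ℝ} (h : HasBoundedRatio c v) (h' : HasBoundedRatio c v') (hc : 0 ≤ c) :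
    HasBoundedRatio c fun n => min (v n) (v' n) := fun n => by
  simp only [mul_min_of_nonneg _ _ hc]
  exact ⟨min_le_min (h n).1 (h' n).1, min_le_min (h n).2 (h' n).2⟩

lemma tsum_mul_le_of_le_add_neighbours {M f : ℤ → ℝ} {ε : ℝ} (h : HasBoundedRatio c v)
    (hv : ∀ n, 0 ≤ v n) (hM : ∀ n, 0 ≤ M n) (hε : 0 ≤ ε)
    (hvM : Summable fun n => v n * M n) (hvf : Summable fun n => v n * f n)
    (hMf : ∀ n, M n ≤ f n + ε * (M (n - 1) + M n + M (n + 1))) :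
    (1 - ε * (1 + 2 * c)) * ∑' n, v n * M n ≤ ∑' n, v n * f n := by
  obtain ⟨hsum_left, htsum_left⟩ := summable_and_tsum_mul_shift_le (-1) hv hM hvM fun n => by
    simpa using (h (n + -1)).1
  obtain ⟨hsum_right, htsum_right⟩ := summable_and_tsum_mul_shift_le 1 hv hM hvM fun n => (h n).2
  have hpointwise : ∀ n, v n * M n ≤
      v n * f n + ε * (v n * M (n + -1)) + ε * (v n * M n) + ε * (v n * M (n + 1)) := fun n => by
    have := mul_le_mul_of_nonneg_left (hMf n) (hv n)
    rw [← sub_eq_add_neg]; linarith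
  have hsum := ((hvf.hasSum.add (hsum_left.hasSum.mul_left ε)).add
    (hvM.hasSum.mul_left ε)).add (hsum_right.hasSum.mul_left ε)
  have := hasSum_le hpointwise hvM.hasSum hsum
  nlinarith [mul_le_mul_of_nonneg_left htsum_left hε, mul_le_mul_of_nonneg_left htsum_right hε]

end HasBoundedRatio

lemma exists_hasBoundedRatio {w : ℤ → ℝ} (hw : ∀ n, 0 < w n)
    (h : ∃ C : ℝ, ∀ n, w (n + 1) / w n + w n / w (n + 1) ≤ C) :
    ∃ c, 2 ≤ c ∧ HasBoundedRatio c w := by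
  obtain ⟨C, hC⟩ := h
  refine ⟨max C 2, le_max_right _ _, fun n => ⟨?_, ?_⟩⟩
  · have hq : w (n + 1) / w n ≤ max C 2 :=
      (le_add_of_nonneg_right (div_pos (hw n) (hw (n + 1))).le).trans
        ((hC n).trans (le_max_left _ _))
    exact (div_le_iff₀ (hw n)).1 hq
  · have hq : w n / w (n + 1) ≤ max C 2 :=
      (le_add_of_nonneg_left (div_pos (hw (n + 1)) (hw n)).le).trans
        ((hC n).trans (le_max_left _ _))
    exact (div_le_iff₀ (hw (n + 1))).1 hq

lemma hasBoundedRatio_div_two_pow_natAbs {R : ℝ} (hR : 0 ≤ R) :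
    HasBoundedRatio 2 fun n => R / 2 ^ n.natAbs := by
  have key : ∀ j k : ℕ, j ≤ k + 1 → R / 2 ^ k ≤ 2 * (R / 2 ^ j) := fun j k hjk => by
    calc R / 2 ^ k = 2 * (R / 2 ^ (k + 1)) := by rw [pow_succ]; field_simp
      _ ≤ 2 * (R / 2 ^ j) := by gcongr; exact one_le_two
  exact fun n => ⟨key _ _ (by omega), key _ _ (by omega)⟩

lemma summable_div_two_pow_natAbs (R : ℝ) : Summable fun n : ℤ => R / 2 ^ n.natAbs := by
  have h : Summable fun n : ℕ => R / 2 ^ n := by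
    simpa [div_eq_mul_inv] using summable_geometric_two.mul_left R
  exact .of_nat_of_neg (by simpa using h) (by simpa using h)

noncomputable def cappedWeight (w : ℤ → ℝ) (R : ℝ) (n : ℤ) : ℝ := min (w n) (R / 2 ^ n.natAbs)

section cappedWeight

variable {w : ℤ → ℝ} {R : ℝ}

lemma cappedWeight_nonneg (hw : ∀ n, 0 ≤ w n) (hR : 0 ≤ R) (n : ℤ) : 0 ≤ cappedWeight w R n :=
  le_min (hw n) (by positivity)

lemma cappedWeight_le (n : ℤ) : cappedWeight w R n ≤ w n := min_le_left _ _

lemma summable_cappedWeight (hw : ∀ n, 0 ≤ w n) (hR : 0 ≤ R) : Summable (cappedWeight w R) :=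
  (summable_div_two_pow_natAbs R).of_nonneg_of_le (cappedWeight_nonneg hw hR) fun _ =>
    min_le_right _ _

lemma HasBoundedRatio.cappedWeight {c : ℝ} (h : HasBoundedRatio c w) (hc : 2 ≤ c) (hR : 0 ≤ R) :
    HasBoundedRatio c (cappedWeight w R) :=
  h.min ((hasBoundedRatio_div_two_pow_natAbs hR).mono (fun _ => by positivity) hc) (by linarith)

lemma cappedWeight_eq_of_mul_two_pow_le {n : ℤ} (h : w n * 2 ^ n.natAbs ≤ R) :
    cappedWeight w R n = w n :=
  min_eq_left ((le_div_iff₀ (by positivity)).2 h)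

end cappedWeight

lemma summable_mul_of_forall_tsum_cappedWeight_mul_le {w M : ℤ → ℝ} {B : ℝ}
    (hw : ∀ n, 0 ≤ w n) (hM : ∀ n, 0 ≤ M n)
    (h : ∀ R, 0 ≤ R → (Summable fun n => cappedWeight w R n * M n) ∧
      ∑' n, cappedWeight w R n * M n ≤ B) :
    Summable fun n => w n * M n := by
  refine summable_of_sum_le (c := B) (fun n => mul_nonneg (hw n) (hM n)) fun F => ?_
  set R := ∑ n ∈ F, w n * 2 ^ n.natAbs
  have hR : 0 ≤ R := Finset.sum_nonneg fun n _ => by have := hw n; positivity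
  have hcap : ∀ n ∈ F, cappedWeight w R n = w n := fun n hn =>
    cappedWeight_eq_of_mul_two_pow_le
      (Finset.single_le_sum (f := fun n => w n * 2 ^ n.natAbs)
        (fun n _ => by have := hw n; positivity) hn)
  obtain ⟨hsum, hle⟩ := h R hR
  calc ∑ n ∈ F, w n * M n = ∑ n ∈ F, cappedWeight w R n * M n :=
        Finset.sum_congr rfl fun n hn => by rw [hcap n hn]
    _ ≤ ∑' n, cappedWeight w R n * M n :=
        hsum.sum_le_tsum F fun n _ => mul_nonneg (cappedWeight_nonneg hw hR n) (hM n)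
    _ ≤ B := hle

structure IsTodaSolution_s13 (a b : ℝ → ℤ → ℝ) : Prop where
  hasDerivAt_a : ∀ t n, HasDerivAt (fun s => a s n) (a t n * (b t (n + 1) - b t n)) t
  hasDerivAt_b : ∀ t n, HasDerivAt (fun s => b s n) (2 * ((a t n) ^ 2 - (a t (n - 1)) ^ 2)) t

noncomputable def todaDeviation (a b : ℝ → ℤ → ℝ) (t : ℝ) (n : ℤ) : ℝ := |a t n - 1 / 2| + |b t n|

section Toda

variable {a b : ℝ → ℤ → ℝ}

lemma todaDeviation_nonneg (t : ℝ) (n : ℤ) : 0 ≤ todaDeviation a b t n := by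
  unfold todaDeviation; positivity

lemma todaDeviation_le (t : ℝ) (n : ℤ) : todaDeviation a b t n ≤ |a t n| + |b t n| + 1 / 2 := by
  have := abs_sub (a t n) (1 / 2)
  rw [abs_of_pos (by norm_num : (0 : ℝ) < 1 / 2)] at this
  unfold todaDeviation; linarith

lemma abs_toda_a_deriv_le {C t : ℝ} {n : ℤ} (ha : |a t n| ≤ C) :
    |a t n * (b t (n + 1) - b t n)| ≤
      C * (todaDeviation a b t n + todaDeviation a b t (n + 1)) := by
  have hb : |b t (n + 1) - b t n| ≤ todaDeviation a b t n + todaDeviation a b t (n + 1) := by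
    unfold todaDeviation
    linarith [abs_sub (b t (n + 1)) (b t n), abs_nonneg (a t n - 1 / 2),
      abs_nonneg (a t (n + 1) - 1 / 2)]
  rw [abs_mul]
  exact mul_le_mul ha hb (abs_nonneg _) ((abs_nonneg _).trans ha)

lemma abs_toda_b_deriv_le {C t : ℝ} {n : ℤ} (ha : |a t n| ≤ C) (ha' : |a t (n - 1)| ≤ C) :
    |2 * (a t n ^ 2 - a t (n - 1) ^ 2)| ≤
      4 * C * (todaDeviation a b t (n - 1) + todaDeviation a b t n) := by
  have hdiff : |a t n - a t (n - 1)| ≤ todaDeviation a b t (n - 1) + todaDeviation a b t n := by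
    unfold todaDeviation
    linarith [abs_sub_le (a t n) (1 / 2) (a t (n - 1)), abs_sub_comm (1 / 2) (a t (n - 1)),
      abs_nonneg (b t n), abs_nonneg (b t (n - 1))]
  have hsum : |a t n + a t (n - 1)| ≤ 2 * C := by linarith [abs_add_le (a t n) (a t (n - 1))]
  calc |2 * (a t n ^ 2 - a t (n - 1) ^ 2)|
      = 2 * (|a t n - a t (n - 1)| * |a t n + a t (n - 1)|) := by
        rw [← abs_mul, ← abs_two, ← abs_mul, abs_two]; ring_nf
    _ ≤ 2 * ((todaDeviation a b t (n - 1) + todaDeviation a b t n) * (2 * C)) := by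
        gcongr
        exact (todaDeviation_nonneg _ _).trans (le_add_of_nonneg_left (todaDeviation_nonneg _ _))
    _ = 4 * C * (todaDeviation a b t (n - 1) + todaDeviation a b t n) := by ring

end Toda

namespace IsTodaSolution_s13

variable {a b : ℝ → ℤ → ℝ}

lemma todaDeviation_le_add {C s₀ s₁ σ : ℝ} {M : ℤ → ℝ} (hab : IsTodaSolution_s13 a b)
    (hC : ∀ s ∈ uIcc s₀ s₁, ∀ n, |a s n| ≤ C)
    (hM : ∀ s ∈ uIcc s₀ s₁, ∀ n, todaDeviation a b s n ≤ M n) (hσ : σ ∈ uIcc s₀ s₁) (n : ℤ) :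
    todaDeviation a b σ n ≤
      todaDeviation a b s₀ n + 5 * C * |s₁ - s₀| * (M (n - 1) + M n + M (n + 1)) := by
  have hC0 : 0 ≤ C := (abs_nonneg _).trans (hC s₀ left_mem_uIcc n)
  have hM0 : ∀ k, 0 ≤ M k := fun k => (todaDeviation_nonneg _ _).trans (hM s₀ left_mem_uIcc k)
  have ha : |a σ n - a s₀ n| ≤ C * (M n + M (n + 1)) * |σ - s₀| :=
    convex_uIcc s₀ s₁ |>.norm_image_sub_le_of_norm_hasDerivWithin_le (f := fun s => a s n)
      (fun s _ => (hab.hasDerivAt_a s n).hasDerivWithinAt)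
      (fun s hs => (abs_toda_a_deriv_le (hC s hs n)).trans
        (mul_le_mul_of_nonneg_left (add_le_add (hM s hs n) (hM s hs (n + 1))) hC0))
      left_mem_uIcc hσ
  have hb : |b σ n - b s₀ n| ≤ 4 * C * (M (n - 1) + M n) * |σ - s₀| :=
    convex_uIcc s₀ s₁ |>.norm_image_sub_le_of_norm_hasDerivWithin_le (f := fun s => b s n)
      (fun s _ => (hab.hasDerivAt_b s n).hasDerivWithinAt)
      (fun s hs => (abs_toda_b_deriv_le (hC s hs n) (hC s hs (n - 1))).trans
        (mul_le_mul_of_nonneg_left (add_le_add (hM s hs (n - 1)) (hM s hs n)) (by positivity)))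
      left_mem_uIcc hσ
  have htri : todaDeviation a b σ n ≤
      todaDeviation a b s₀ n + |a σ n - a s₀ n| + |b σ n - b s₀ n| := by
    unfold todaDeviation
    linarith [abs_sub_le (a σ n) (a s₀ n) (1 / 2), abs_sub_abs_le_abs_sub (b σ n) (b s₀ n)]
  have hdist : |σ - s₀| ≤ |s₁ - s₀| := abs_sub_left_of_mem_uIcc hσ
  calc todaDeviation a b σ n
      ≤ todaDeviation a b s₀ n + 5 * C * |σ - s₀| * (M (n - 1) + M n + M (n + 1)) := by
        nlinarith [mul_nonneg (mul_nonneg hC0 (abs_nonneg (σ - s₀))) (hM0 (n - 1)),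
          mul_nonneg (mul_nonneg hC0 (abs_nonneg (σ - s₀))) (hM0 (n + 1))]
    _ ≤ _ := by
        have := add_nonneg (add_nonneg (hM0 (n - 1)) (hM0 n)) (hM0 (n + 1))
        gcongr

lemma summable_mul_todaDeviation_of_summable {w : ℤ → ℝ} {c C s₀ s₁ : ℝ}
    (hab : IsTodaSolution_s13 a b) (hw : ∀ n, 0 ≤ w n) (hc : 2 ≤ c) (hwc : HasBoundedRatio c w)
    (hC : ∀ s ∈ uIcc s₀ s₁, ∀ n, |a s n| + |b s n| ≤ C)
    (hstep : 5 * C * |s₁ - s₀| * (1 + 2 * c) ≤ 1 / 2)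
    (h₀ : Summable fun n => w n * todaDeviation a b s₀ n) :
    Summable fun n => w n * todaDeviation a b s₁ n := by
  set J := uIcc s₀ s₁
  have : Nonempty J := ⟨⟨s₀, left_mem_uIcc⟩⟩
  set M : ℤ → ℝ := fun n => ⨆ s : J, todaDeviation a b s n
  have hbdd : ∀ s ∈ J, ∀ n, todaDeviation a b s n ≤ C + 1 / 2 := fun s hs n =>
    (todaDeviation_le s n).trans (by linarith [hC s hs n])
  have hle : ∀ s ∈ J, ∀ n, todaDeviation a b s n ≤ M n := fun s hs n =>
    le_ciSup (f := fun s : J => todaDeviation a b s n)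
      ⟨C + 1 / 2, by rintro _ ⟨s, rfl⟩; exact hbdd s s.2 n⟩ ⟨s, hs⟩
  have hMC : ∀ n, M n ≤ C + 1 / 2 := fun n => ciSup_le fun s => hbdd s s.2 n
  have hM0 : ∀ n, 0 ≤ M n := fun n => (todaDeviation_nonneg _ _).trans (hle s₀ left_mem_uIcc n)
  have hMf : ∀ n, M n ≤ todaDeviation a b s₀ n +
      5 * C * |s₁ - s₀| * (M (n - 1) + M n + M (n + 1)) := fun n =>
    ciSup_le fun s => hab.todaDeviation_le_add
      (fun s hs n => (le_add_of_nonneg_right (abs_nonneg _)).trans (hC s hs n)) hle s.2 n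
  have hC0 : 0 ≤ C := (add_nonneg (abs_nonneg _) (abs_nonneg _)).trans (hC s₀ left_mem_uIcc 0)
  have hwM : Summable fun n => w n * M n := by
    refine summable_mul_of_forall_tsum_cappedWeight_mul_le
      (B := 2 * ∑' n, w n * todaDeviation a b s₀ n) hw hM0 fun R hR => ?_
    have hv := cappedWeight_nonneg hw hR
    have hvM : Summable fun n => cappedWeight w R n * M n :=
      ((summable_cappedWeight hw hR).mul_right (C + 1 / 2)).of_nonneg_of_le
        (fun n => mul_nonneg (hv n) (hM0 n)) fun n => mul_le_mul_of_nonneg_left (hMC n) (hv n)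
    have hle₀ : ∀ n, cappedWeight w R n * todaDeviation a b s₀ n ≤ w n * todaDeviation a b s₀ n :=
      fun n => mul_le_mul_of_nonneg_right (cappedWeight_le n) (todaDeviation_nonneg _ _)
    have hvf : Summable fun n => cappedWeight w R n * todaDeviation a b s₀ n :=
      h₀.of_nonneg_of_le (fun n => mul_nonneg (hv n) (todaDeviation_nonneg _ _)) hle₀
    have habsorb := (hwc.cappedWeight hc hR).tsum_mul_le_of_le_add_neighbours hv hM0
      (by positivity) hvM hvf hMf
    have htsum_le := hvf.tsum_le_tsum hle₀ h₀
    have htsum_nonneg : 0 ≤ ∑' n, cappedWeight w R n * M n :=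
      tsum_nonneg fun n => mul_nonneg (hv n) (hM0 n)
    exact ⟨hvM, by nlinarith⟩
  exact hwM.of_nonneg_of_le (fun n => mul_nonneg (hw n) (todaDeviation_nonneg _ _))
    fun n => mul_le_mul_of_nonneg_left (hle s₁ right_mem_uIcc n) (hw n)

lemma isLocallyConstant_summable_mul_todaDeviation {w : ℤ → ℝ} {c : ℝ}
    (hab : IsTodaSolution_s13 a b)
    (hbdd : ∀ T : ℝ, ∃ C, ∀ t ∈ Icc (-T) T, ∀ n, |a t n| + |b t n| ≤ C)
    (hw : ∀ n, 0 ≤ w n) (hc : 2 ≤ c) (hwc : HasBoundedRatio c w) :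
    IsLocallyConstant fun t => Summable fun n => w n * todaDeviation a b t n := by
  refine (IsLocallyConstant.iff_eventually_eq _).2 fun x => ?_
  obtain ⟨C, hC⟩ := hbdd (|x| + 1)
  have hx : x ∈ Ioo (-(|x| + 1)) (|x| + 1) :=
    ⟨by linarith [neg_abs_le x], by linarith [le_abs_self x]⟩
  have hsmall : ∀ᶠ y in 𝓝 x, 5 * C * |y - x| * (1 + 2 * c) < 1 / 2 := by
    have : Tendsto (fun y => 5 * C * |y - x| * (1 + 2 * c)) (𝓝 x) (𝓝 0) :=
      (by fun_prop : Continuous fun y => 5 * C * |y - x| * (1 + 2 * c)).tendsto' x 0 (by simp)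
    exact this.eventually_lt_const (by norm_num)
  filter_upwards [Icc_mem_nhds hx.1 hx.2, hsmall] with y hy hyx
  have hJ : ∀ s ∈ uIcc x y, ∀ n, |a s n| + |b s n| ≤ C := fun s hs =>
    hC s (uIcc_subset_Icc (Ioo_subset_Icc_self hx) hy hs)
  have hyx' : 5 * C * |x - y| * (1 + 2 * c) ≤ 1 / 2 := by rw [abs_sub_comm]; exact hyx.le
  exact propext ⟨hab.summable_mul_todaDeviation_of_summable hw hc hwc (uIcc_comm x y ▸ hJ) hyx',
    hab.summable_mul_todaDeviation_of_summable hw hc hwc hJ hyx.le⟩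

end IsTodaSolution_s13

/-- Short-range persistence: if `(a(t), b(t))` is a bounded Toda solution
and `Σ_n w(n)(|a(n,t₀) − 1/2| + |b(n,t₀)|) < ∞` for one `t₀`, where `w(n) ≥ 1` satisfies
`sup_n(w(n+1)/w(n) + w(n)/w(n+1)) < ∞`, then the same sum is finite for all `t ∈ ℝ`. -/
theorem toda_short_range_persistence
    (w : ℤ → ℝ) (hw1 : ∀ n, 1 ≤ w n)
    (hw2 : ∃ C : ℝ, ∀ n, w (n + 1) / w n + w n / w (n + 1) ≤ C)
    (a b : ℝ → ℤ → ℝ)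
    (hbdd : ∀ T : ℝ, ∃ C, ∀ t ∈ Set.Icc (-T) T, ∀ n, |a t n| + |b t n| ≤ C)
    (toda_a : ∀ t n, HasDerivAt (fun s => a s n) (a t n * (b t (n + 1) - b t n)) t)
    (toda_b : ∀ t n, HasDerivAt (fun s => b s n)
      (2 * ((a t n) ^ 2 - (a t (n - 1)) ^ 2)) t)
    (t₀ : ℝ)
    (h₀ : Summable (fun n => w n * (|a t₀ n - 1 / 2| + |b t₀ n|))) :
    ∀ t, Summable (fun n => w n * (|a t n - 1 / 2| + |b t n|)) := by
  intro t
  have hw : ∀ n, 0 < w n := fun n => zero_lt_one.trans_le (hw1 n)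
  obtain ⟨c, hc, hwc⟩ := exists_hasBoundedRatio hw hw2
  have hab : IsTodaSolution_s13 a b := ⟨toda_a, toda_b⟩
  have hconst := (hab.isLocallyConstant_summable_mul_todaDeviation hbdd (fun n => (hw n).le) hc
    hwc).apply_eq_of_preconnectedSpace t₀ t
  exact hconst ▸ h₀
end

section
/- Decaying power-law asymptotics are preserved: if a(n,0) = 1/2 + α n^{-δ} + O(n^{-δ-ε}), b(n,0) = β n^{-δ} + O(n^{-δ-ε}) as n → +∞ (with α, β ∈ ℝ, δ ≥ 0, 0 < ε ≤ 1) and (a(0)−1/2, b(0)) is bounded, then the Toda solution satisfies a(n,t) = 1/2 + α n^{-δ} + O(n^{-δ-ε}) and b(n,t) = β n^{-δ} + O(n^{-δ-ε}) as n → +∞, for every fixed t ∈ ℝ. -/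
/-!
Weigh the residuals `a - a₀`, `b - b₀`, where `a₀ n = 1/2 + α n^(-δ)` and `b₀ n = β n^(-δ)`,
by `W n = max(n, 1)^(δ+ε)`. Neighbouring values of `W` differ by at most the factor `2^(δ+ε)`,
and `W (a₀⁺ - a₀)`, `W (b₀⁺ - b₀)` are bounded because `a₀⁺ - a₀ = O(n^(-δ-1))` and `ε ≤ 1`.
Hence, along a bounded solution, the time derivative of the weighted residual is bounded by an
affine function of its weighted sup norm, and a Gronwall argument bounds that norm on every
compact time interval. Gronwall needs the weighted norm to be finite a priori, so it is run with
`W` truncated at an arbitrary height; the bound it gives does not depend on the height.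
-/

open Asymptotics Filter Real Set Finset
open scoped Nat

lemma hasDerivAt_pow_succ_div_factorial (i : ℕ) (x : ℝ) :
    HasDerivAt (fun y : ℝ => y ^ (i + 1) / ((i + 1)! : ℝ)) (x ^ i / (i ! : ℝ)) x := by
  refine ((hasDerivAt_pow (i + 1) x).div_const _).congr_deriv ?_
  rw [Nat.factorial_succ, Nat.add_sub_cancel]
  push_cast
  field_simp

lemma hasDerivAt_sum_range_succ_pow_div_factorial (j : ℕ) (x : ℝ) :
    HasDerivAt (fun y : ℝ => ∑ i ∈ range (j + 1), y ^ i / (i ! : ℝ))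
      (∑ i ∈ range j, x ^ i / (i ! : ℝ)) x := by
  simp_rw [sum_range_succ']
  simpa using (HasDerivAt.fun_sum fun i _ => hasDerivAt_pow_succ_div_factorial i x).add_const 1

section Gronwall

variable {ι E : Type*} [NormedAddCommGroup E] [NormedSpace ℝ E]

theorem norm_add_one_le_exp_of_norm_deriv_le_sup {R R' : ℝ → ι → E} {T A B K : ℝ}
    (hK : 0 ≤ K) (hR : ∀ n, ∀ t ∈ Icc 0 T, HasDerivAt (R · n) (R' t n) t)
    (hB : ∀ t ∈ Icc 0 T, ∀ n, ‖R t n‖ ≤ B) (hA : ∀ n, ‖R 0 n‖ ≤ A)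
    (hR' : ∀ t ∈ Icc 0 T, ∀ u, (∀ m, ‖R t m‖ ≤ u) → ∀ n, ‖R' t n‖ ≤ K * (u + 1)) :
    ∀ t ∈ Icc 0 T, ∀ n, ‖R t n‖ + 1 ≤ (A + 1) * exp (K * t) := by
  -- `P j` is the `j`-th Picard iterate of `v' = K v`, `v 0 = A + 1`, started from the a priori
  -- bound `B + 1`; iterating needs no regularity of `t ↦ ⨆ n, ‖R t n‖`.
  let P : ℕ → ℝ → ℝ := fun j t =>
    (A + 1) * ∑ i ∈ range j, (K * t) ^ i / (i ! : ℝ) + (B + 1) * ((K * t) ^ j / (j ! : ℝ))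
  have hP : ∀ j t, HasDerivAt (P (j + 1)) (K * P j t) t := by
    intro j t
    have hKt : HasDerivAt (fun s => K * s) K t := by simpa using (hasDerivAt_id t).const_mul K
    have h1 := ((hasDerivAt_sum_range_succ_pow_div_factorial j (K * t)).comp t hKt).const_mul
      (A + 1)
    have h2 := ((hasDerivAt_pow_succ_div_factorial j (K * t)).comp t hKt).const_mul (B + 1)
    exact (h1.add h2).congr_deriv (by simp only [P]; ring)
  have hiter : ∀ j, ∀ t ∈ Icc 0 T, ∀ n, ‖R t n‖ + 1 ≤ P j t := by
    intro j
    induction j with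
    | zero =>
      intro t ht n
      simpa [P] using hB t ht n
    | succ j ih =>
      intro t ht n
      have hsub : Icc 0 t ⊆ Icc 0 T := Icc_subset_Icc le_rfl ht.2
      have := image_norm_le_of_norm_deriv_right_le_deriv_boundary (a := 0) (b := t)
        (f := (R · n)) (B := fun s => P (j + 1) s - 1)
        (fun s hs => (hR n s (hsub hs)).continuousAt.continuousWithinAt)
        (fun s hs => (hR n s (hsub (Ico_subset_Icc_self hs))).hasDerivWithinAt)
        (by simpa [P, sum_range_succ'] using hA n) (fun s => (hP j s).sub_const 1)
        (fun s hs => by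
          have hs' := hsub (Ico_subset_Icc_self hs)
          simpa using hR' s hs' (P j s - 1) (fun m => by linarith [ih s hs' m]) n)
        (right_mem_Icc.2 ht.1)
      linarith
  intro t ht n
  have hKt : 0 ≤ K * t := mul_nonneg hK ht.1
  have hA1 : 0 ≤ A + 1 := by linarith [norm_nonneg (R 0 n), hA n]
  have hlim := ((FloorSemiring.tendsto_pow_div_factorial_atTop (K * t)).const_mul (B + 1)).const_add
    ((A + 1) * exp (K * t))
  refine le_of_tendsto_of_tendsto' tendsto_const_nhds (by simpa using hlim) fun j => ?_
  calc ‖R t n‖ + 1 ≤ P j t := hiter j t ht n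
    _ ≤ _ := by
      have := mul_le_mul_of_nonneg_left (sum_le_exp_of_nonneg hKt j) hA1
      simp only [P]
      linarith

theorem norm_add_one_le_exp_abs_of_norm_deriv_le_sup {R R' : ℝ → ι → E} {T A B K : ℝ}
    (hK : 0 ≤ K) (hR : ∀ n, ∀ t ∈ Icc (-T) T, HasDerivAt (R · n) (R' t n) t)
    (hB : ∀ t ∈ Icc (-T) T, ∀ n, ‖R t n‖ ≤ B) (hA : ∀ n, ‖R 0 n‖ ≤ A)
    (hR' : ∀ t ∈ Icc (-T) T, ∀ u, (∀ m, ‖R t m‖ ≤ u) → ∀ n, ‖R' t n‖ ≤ K * (u + 1)) :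
    ∀ t ∈ Icc (-T) T, ∀ n, ‖R t n‖ + 1 ≤ (A + 1) * exp (K * |t|) := by
  intro t ht n
  have hforward : Icc 0 T ⊆ Icc (-T) T := Icc_subset_Icc (by linarith [ht.1, ht.2]) le_rfl
  have hbackward : ∀ s ∈ Icc 0 T, -s ∈ Icc (-T) T :=
    fun s hs => ⟨by linarith [hs.2], by linarith [hs.1, hs.2]⟩
  rcases le_total 0 t with h | h
  · rw [abs_of_nonneg h]
    exact norm_add_one_le_exp_of_norm_deriv_le_sup hK (fun n s hs => hR n s (hforward hs))
      (fun s hs => hB s (hforward hs)) hA (fun s hs => hR' s (hforward hs)) t ⟨h, ht.2⟩ n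
  · have := norm_add_one_le_exp_of_norm_deriv_le_sup (R := fun s n => R (-s) n)
      (R' := fun s n => -R' (-s) n) hK
      (fun n s hs => by
        simpa [Function.comp_def] using (hR n (-s) (hbackward s hs)).scomp s (hasDerivAt_neg s))
      (fun s hs => hB (-s) (hbackward s hs)) (by simpa using hA)
      (fun s hs u hu n => by simpa using hR' (-s) (hbackward s hs) u hu n) (-t)
      ⟨by linarith, by linarith [ht.1]⟩ n
    rw [neg_neg] at this
    rwa [abs_of_nonpos h]

end Gronwall

lemma abs_sub_le_add_of_abs_add_abs_le {x y x₀ y₀ C D : ℝ} (h : |x| + |y| ≤ C)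
    (h₀ : |x₀| + |y₀| ≤ D) : |x - x₀| ≤ C + D ∧ |y - y₀| ≤ C + D :=
  ⟨(abs_sub x x₀).trans (by linarith [abs_nonneg y, abs_nonneg y₀]),
    (abs_sub y y₀).trans (by linarith [abs_nonneg x, abs_nonneg x₀])⟩

lemma mul_abs_sub_le_of_mul_abs_sub_le {w w' x x₀ y y₀ c u G : ℝ} (hw : 0 ≤ w) (hc : 0 ≤ c)
    (hww' : w ≤ c * w') (hx : w * |x - x₀| ≤ u) (hy : w' * |y - y₀| ≤ u)
    (hG : w * |x₀ - y₀| ≤ G) : w * |x - y| ≤ (1 + c) * u + G := by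
  have hy' : w * |y - y₀| ≤ c * u := calc
    w * |y - y₀| ≤ c * w' * |y - y₀| := mul_le_mul_of_nonneg_right hww' (abs_nonneg _)
    _ = c * (w' * |y - y₀|) := by ring
    _ ≤ c * u := mul_le_mul_of_nonneg_left hy hc
  have htri : |x - y| ≤ |x - x₀| + |y₀ - y| + |x₀ - y₀| := by
    have := abs_add_three (x - x₀) (y₀ - y) (x₀ - y₀)
    rwa [show x - x₀ + (y₀ - y) + (x₀ - y₀) = x - y by ring] at this
  rw [abs_sub_comm y₀] at htri
  nlinarith [mul_le_mul_of_nonneg_left htri hw]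

lemma toda_field_weighted_le {a b a₀ b₀ w : ℤ → ℝ} {C c G u : ℝ} (n : ℤ)
    (hC : ∀ m, |a m| ≤ C) (hw : 0 ≤ w n) (hc : 0 ≤ c)
    (hsucc : w n ≤ c * w (n + 1)) (hpred : w n ≤ c * w (n - 1))
    (hga : ∀ m, w m * |a₀ (m + 1) - a₀ m| ≤ G) (hgb : ∀ m, w m * |b₀ (m + 1) - b₀ m| ≤ G)
    (ha : ∀ m, w m * |a m - a₀ m| ≤ u) (hb : ∀ m, w m * |b m - b₀ m| ≤ u) :
    w n * |a n * (b (n + 1) - b n)| ≤ 4 * C * (1 + c) * (u + G) ∧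
      w n * |2 * (a n ^ 2 - a (n - 1) ^ 2)| ≤ 4 * C * (1 + c) * (u + G) := by
  have hC0 : 0 ≤ C := (abs_nonneg _).trans (hC n)
  have hG0 : 0 ≤ G := (mul_nonneg hw (abs_nonneg _)).trans (hga n)
  have hgb' : w n * |b₀ n - b₀ (n + 1)| ≤ (1 + c) * G := by
    rw [abs_sub_comm]; nlinarith [hgb n]
  have hga' : w n * |a₀ n - a₀ (n - 1)| ≤ (1 + c) * G := calc
    w n * |a₀ n - a₀ (n - 1)| ≤ c * w (n - 1) * |a₀ (n - 1 + 1) - a₀ (n - 1)| := by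
      rw [sub_add_cancel]; exact mul_le_mul_of_nonneg_right hpred (abs_nonneg _)
    _ ≤ c * G := by rw [mul_assoc]; exact mul_le_mul_of_nonneg_left (hga (n - 1)) hc
    _ ≤ (1 + c) * G := by nlinarith
  have hdb := mul_abs_sub_le_of_mul_abs_sub_le hw hc hsucc (hb n) (hb (n + 1)) hgb'
  have hda := mul_abs_sub_le_of_mul_abs_sub_le hw hc hpred (ha n) (ha (n - 1)) hga'
  rw [abs_sub_comm (b n)] at hdb
  have hsum : |a n + a (n - 1)| ≤ 2 * C :=
    (abs_add_le _ _).trans (by linarith [hC n, hC (n - 1)])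
  have hu : 0 ≤ (1 + c) * (u + G) :=
    (mul_nonneg hw (abs_nonneg (a n - a (n - 1)))).trans (by linarith)
  constructor
  · calc w n * |a n * (b (n + 1) - b n)| = |a n| * (w n * |b (n + 1) - b n|) := by
          rw [abs_mul]; ring
      _ ≤ C * ((1 + c) * (u + G)) :=
          mul_le_mul (hC n) (by linarith) (mul_nonneg hw (abs_nonneg _)) hC0
      _ ≤ 4 * C * (1 + c) * (u + G) := by nlinarith
  · calc w n * |2 * (a n ^ 2 - a (n - 1) ^ 2)|
        = 2 * |a n + a (n - 1)| * (w n * |a n - a (n - 1)|) := by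
          rw [show a n ^ 2 - a (n - 1) ^ 2 = (a n + a (n - 1)) * (a n - a (n - 1)) by ring,
            abs_mul, abs_mul, abs_two]; ring
      _ ≤ 2 * (2 * C) * ((1 + c) * (u + G)) :=
          mul_le_mul (by linarith) (by linarith) (mul_nonneg hw (abs_nonneg _)) (by positivity)
      _ = 4 * C * (1 + c) * (u + G) := by ring

theorem toda_weighted_residual_le_of_bounded_weight {a b : ℝ → ℤ → ℝ}
    (toda_a : ∀ t n, HasDerivAt (fun s => a s n) (a t n * (b t (n + 1) - b t n)) t)
    (toda_b : ∀ t n, HasDerivAt (fun s => b s n)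
      (2 * ((a t n) ^ 2 - (a t (n - 1)) ^ 2)) t)
    {a₀ b₀ w : ℤ → ℝ} {T C D L c G A : ℝ}
    (hC : ∀ t ∈ Icc (-T) T, ∀ n, |a t n| ≤ C)
    (hD : ∀ t ∈ Icc (-T) T, ∀ n, |a t n - a₀ n| ≤ D ∧ |b t n - b₀ n| ≤ D)
    (hw : ∀ n, 0 ≤ w n) (hwL : ∀ n, w n ≤ L) (hc : 0 ≤ c)
    (hsucc : ∀ n, w n ≤ c * w (n + 1)) (hpred : ∀ n, w n ≤ c * w (n - 1))
    (hga : ∀ n, w n * |a₀ (n + 1) - a₀ n| ≤ G) (hgb : ∀ n, w n * |b₀ (n + 1) - b₀ n| ≤ G)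
    (hA : ∀ n, w n * |a 0 n - a₀ n| ≤ A ∧ w n * |b 0 n - b₀ n| ≤ A) :
    ∀ t ∈ Icc (-T) T, ∀ n,
      w n * |a t n - a₀ n| ≤ (A + 1) * exp (4 * C * (1 + c) * (1 + G) * |t|) ∧
      w n * |b t n - b₀ n| ≤ (A + 1) * exp (4 * C * (1 + c) * (1 + G) * |t|) := by
  intro t ht
  have hC0 : 0 ≤ C := (abs_nonneg _).trans (hC t ht 0)
  have hG0 : 0 ≤ G := (mul_nonneg (hw 0) (abs_nonneg _)).trans (hga 0)
  have hprod : ∀ n (x y u : ℝ),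
      ‖(w n * x, w n * y)‖ ≤ u ↔ w n * |x| ≤ u ∧ w n * |y| ≤ u := by
    intro n x y u
    rw [norm_prod_le_iff, Real.norm_eq_abs, Real.norm_eq_abs, abs_mul, abs_mul,
      abs_of_nonneg (hw n)]
  have hgron := norm_add_one_le_exp_abs_of_norm_deriv_le_sup
    (R := fun s n => (w n * (a s n - a₀ n), w n * (b s n - b₀ n)))
    (R' := fun s n => (w n * (a s n * (b s (n + 1) - b s n)),
      w n * (2 * ((a s n) ^ 2 - (a s (n - 1)) ^ 2))))
    (B := L * D) (K := 4 * C * (1 + c) * (1 + G)) (by positivity)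
    (fun n s _ => (((toda_a s n).sub_const (a₀ n)).const_mul (w n)).prodMk
      (((toda_b s n).sub_const (b₀ n)).const_mul (w n)))
    (fun s hs n => (hprod n _ _ _).2
      ⟨mul_le_mul (hwL n) (hD s hs n).1 (abs_nonneg _) ((hw n).trans (hwL n)),
        mul_le_mul (hwL n) (hD s hs n).2 (abs_nonneg _) ((hw n).trans (hwL n))⟩)
    (fun n => (hprod n _ _ _).2 (hA n))
    (fun s hs u hu n => by
      have hu0 : 0 ≤ u := (norm_nonneg _).trans (hu 0)
      obtain ⟨h₁, h₂⟩ := toda_field_weighted_le n (hC s hs) (hw n) hc (hsucc n) (hpred n)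
        hga hgb (fun m => ((hprod m _ _ _).1 (hu m)).1) (fun m => ((hprod m _ _ _).1 (hu m)).2)
      have hK : 4 * C * (1 + c) * (u + G) ≤ 4 * C * (1 + c) * (1 + G) * (u + 1) := by
        have : u + G ≤ (1 + G) * (u + 1) := by nlinarith
        calc 4 * C * (1 + c) * (u + G) ≤ 4 * C * (1 + c) * ((1 + G) * (u + 1)) := by gcongr
          _ = _ := by ring
      exact (hprod n _ _ _).2 ⟨h₁.trans hK, h₂.trans hK⟩)
    t ht
  intro n
  exact (hprod n _ _ _).1 (by linarith [hgron n])

theorem toda_weighted_residual_bounded {a b : ℝ → ℤ → ℝ}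
    (toda_a : ∀ t n, HasDerivAt (fun s => a s n) (a t n * (b t (n + 1) - b t n)) t)
    (toda_b : ∀ t n, HasDerivAt (fun s => b s n)
      (2 * ((a t n) ^ 2 - (a t (n - 1)) ^ 2)) t)
    (hbdd : ∀ T : ℝ, ∃ C, ∀ t ∈ Icc (-T) T, ∀ n, |a t n| + |b t n| ≤ C)
    {a₀ b₀ W : ℤ → ℝ} {D₀ c G A : ℝ} (hab₀ : ∀ n, |a₀ n| + |b₀ n| ≤ D₀)
    (hW : ∀ n, 0 ≤ W n) (hc : 1 ≤ c)
    (hsucc : ∀ n, W n ≤ c * W (n + 1)) (hpred : ∀ n, W n ≤ c * W (n - 1))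
    (hga : ∀ n, W n * |a₀ (n + 1) - a₀ n| ≤ G) (hgb : ∀ n, W n * |b₀ (n + 1) - b₀ n| ≤ G)
    (hA : ∀ n, W n * |a 0 n - a₀ n| ≤ A ∧ W n * |b 0 n - b₀ n| ≤ A) (t : ℝ) :
    ∃ M, ∀ n, W n * |a t n - a₀ n| ≤ M ∧ W n * |b t n - b₀ n| ≤ M := by
  obtain ⟨C, hC⟩ := hbdd |t|
  refine ⟨(A + 1) * exp (4 * C * (1 + c) * (1 + G) * |t|), fun n => ?_⟩
  -- truncating the weight at height `W n` makes it bounded without changing it at `n`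
  have htrunc : ∀ {x y}, x ≤ c * y → min x (W n) ≤ c * min y (W n) := fun h => by
    rw [mul_min_of_nonneg _ _ (by linarith)]
    exact min_le_min h (le_mul_of_one_le_left (hW n) hc)
  have hle : ∀ {m x}, 0 ≤ x → min (W m) (W n) * x ≤ W m * x :=
    fun hx => mul_le_mul_of_nonneg_right (min_le_left _ _) hx
  have := toda_weighted_residual_le_of_bounded_weight toda_a toda_b
    (w := fun m => min (W m) (W n)) (L := W n) (C := C)
    (fun s hs m => by linarith [hC s hs m, abs_nonneg (b s m)])
    (fun s hs m => abs_sub_le_add_of_abs_add_abs_le (hC s hs m) (hab₀ m))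
    (fun m => le_min (hW m) (hW n)) (fun m => min_le_right _ _) (by linarith)
    (fun m => htrunc (hsucc m)) (fun m => htrunc (hpred m))
    (fun m => (hle (abs_nonneg _)).trans (hga m))
    (fun m => (hle (abs_nonneg _)).trans (hgb m))
    (fun m => ⟨(hle (abs_nonneg _)).trans (hA m).1, (hle (abs_nonneg _)).trans (hA m).2⟩)
    t ⟨neg_abs_le t, le_abs_self t⟩ n
  simpa using this

-- For `n < 0`, `(n : ℝ) ^ (-δ)` is Mathlib's `|n| ^ (-δ) * cos (δ * π)`, so the power-law
-- profile is bounded on all of `ℤ`.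
lemma abs_intCast_rpow_neg_le_one {δ : ℝ} (hδ : 0 ≤ δ) (n : ℤ) : |(n : ℝ) ^ (-δ)| ≤ 1 := by
  rcases eq_or_ne n 0 with rfl | hn
  · rw [Int.cast_zero, abs_of_nonneg (rpow_nonneg le_rfl _)]
    exact zero_rpow_le_one _
  · exact (abs_rpow_le_abs_rpow _ _).trans (rpow_le_one_of_one_le_of_nonpos
      (by exact_mod_cast Int.one_le_abs hn) (neg_nonpos.2 hδ))

lemma abs_add_mul_add_abs_mul_le {x : ℝ} (hx : |x| ≤ 1) (κ α β : ℝ) :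
    |κ + α * x| + |β * x| ≤ |κ| + |α| + |β| := by
  have := abs_add_le κ (α * x)
  rw [abs_mul] at this ⊢
  nlinarith [abs_nonneg α, abs_nonneg β, abs_nonneg x]

lemma abs_rpow_neg_add_one_sub_le {δ x : ℝ} (hδ : 0 ≤ δ) (hx : 1 ≤ x) :
    |(x + 1) ^ (-δ) - x ^ (-δ)| ≤ δ * x ^ (-δ - 1) := by
  have hx0 : 0 < x := one_pos.trans_le hx
  obtain ⟨c, hc, hslope⟩ := exists_hasDerivAt_eq_slope (fun y : ℝ => y ^ (-δ))
    (fun y => -δ * y ^ (-δ - 1)) (lt_add_one x)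
    (continuousOn_id.rpow_const fun y hy => Or.inl (hx0.trans_le hy.1).ne')
    (fun y hy => hasDerivAt_rpow_const (Or.inl (hx0.trans hy.1).ne'))
  have hc0 : 0 < c := hx0.trans hc.1
  rw [add_sub_cancel_left, div_one] at hslope
  rw [← hslope, abs_mul, abs_neg, abs_of_nonneg hδ, abs_of_pos (rpow_pos_of_pos hc0 _)]
  exact mul_le_mul_of_nonneg_left (rpow_le_rpow_of_nonpos hx0 hc.1.le (by linarith)) hδ

noncomputable def powerWeight (γ : ℝ) (n : ℤ) : ℝ := max (n : ℝ) 1 ^ γ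

section PowerWeight

variable {γ : ℝ}

lemma one_le_powerWeight (hγ : 0 ≤ γ) (n : ℤ) : 1 ≤ powerWeight γ n :=
  one_le_rpow (le_max_right _ _) hγ

lemma powerWeight_mono (hγ : 0 ≤ γ) : Monotone (powerWeight γ) := fun _ _ h =>
  rpow_le_rpow (zero_le_one.trans (le_max_right _ _)) (max_le_max (by exact_mod_cast h) le_rfl) hγ

lemma powerWeight_le_two_rpow_mul (hγ : 0 ≤ γ) (n : ℤ) :
    powerWeight γ n ≤ 2 ^ γ * powerWeight γ (n - 1) := by
  have h₁ := le_max_left ((n : ℝ) - 1) 1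
  have h₂ := le_max_right ((n : ℝ) - 1) 1
  rw [powerWeight, powerWeight, Int.cast_sub, Int.cast_one, ← mul_rpow zero_le_two (by linarith)]
  refine rpow_le_rpow (zero_le_one.trans (le_max_right _ _)) ?_ hγ
  exact max_le (by linarith) (by linarith)

lemma powerWeight_of_one_le {n : ℤ} (hn : 1 ≤ n) : powerWeight γ n = (n : ℝ) ^ γ := by
  rw [powerWeight, max_eq_left (by exact_mod_cast hn)]

lemma exists_powerWeight_mul_abs_le_of_isBigO {f : ℤ → ℝ} {D : ℝ} (hγ : 0 ≤ γ)
    (hD : ∀ n, |f n| ≤ D) (hf : f =O[atTop] fun n => (n : ℝ) ^ (-γ)) :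
    ∃ A, ∀ n, powerWeight γ n * |f n| ≤ A := by
  obtain ⟨d, hd⟩ := hf.bound
  obtain ⟨m, hm⟩ := eventually_atTop.1 (hd.and (eventually_ge_atTop 1))
  refine ⟨max d (powerWeight γ m * D), fun n => ?_⟩
  rcases le_total m n with hmn | hnm
  · obtain ⟨hfn, hn⟩ := hm n hmn
    have hn0 : (0 : ℝ) < n := by exact_mod_cast hn
    rw [Real.norm_eq_abs, Real.norm_eq_abs, abs_of_pos (rpow_pos_of_pos hn0 _),
      rpow_neg hn0.le, ← div_eq_mul_inv, le_div_iff₀ (rpow_pos_of_pos hn0 _)] at hfn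
    rw [powerWeight_of_one_le hn, mul_comm]
    exact hfn.trans (le_max_left _ _)
  · exact (mul_le_mul (powerWeight_mono hγ hnm) (hD n) (abs_nonneg _)
      (zero_le_one.trans (one_le_powerWeight hγ m))).trans (le_max_right _ _)

lemma isBigO_rpow_neg_of_powerWeight_mul_abs_le {f : ℤ → ℝ} {M : ℝ}
    (h : ∀ n, powerWeight γ n * |f n| ≤ M) : f =O[atTop] fun n => (n : ℝ) ^ (-γ) := by
  refine IsBigO.of_bound M ?_
  filter_upwards [eventually_ge_atTop 1] with n hn
  have hn0 : (0 : ℝ) < n := by exact_mod_cast hn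
  have := h n
  rw [powerWeight_of_one_le hn, mul_comm, ← le_div_iff₀ (rpow_pos_of_pos hn0 _)] at this
  rwa [Real.norm_eq_abs, Real.norm_eq_abs, abs_of_pos (rpow_pos_of_pos hn0 _), rpow_neg hn0.le]

lemma powerWeight_mul_abs_mul_rpow_neg_succ_sub_le {δ ε : ℝ} (hδ : 0 ≤ δ) (hε : ε ≤ 1)
    (κ : ℝ) (n : ℤ) :
    powerWeight (δ + ε) n * |κ * ((n + 1 : ℤ) : ℝ) ^ (-δ) - κ * (n : ℝ) ^ (-δ)| ≤
      |κ| * (δ + 2) := by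
  rw [← mul_sub, abs_mul, mul_left_comm]
  refine mul_le_mul_of_nonneg_left ?_ (abs_nonneg κ)
  rcases le_or_gt 1 n with hn | hn
  · have hn1 : (1 : ℝ) ≤ n := by exact_mod_cast hn
    have hn0 : (0 : ℝ) < n := one_pos.trans_le hn1
    push_cast
    calc powerWeight (δ + ε) n * |((n : ℝ) + 1) ^ (-δ) - (n : ℝ) ^ (-δ)|
        ≤ (n : ℝ) ^ (δ + ε) * (δ * (n : ℝ) ^ (-δ - 1)) := by
          rw [powerWeight_of_one_le hn]
          exact mul_le_mul_of_nonneg_left (abs_rpow_neg_add_one_sub_le hδ hn1)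
            (rpow_nonneg hn0.le _)
      _ = δ * (n : ℝ) ^ (ε - 1) := by
          rw [mul_left_comm, ← rpow_add hn0]; ring_nf
      _ ≤ δ * 1 := mul_le_mul_of_nonneg_left
          (rpow_le_one_of_one_le_of_nonpos hn1 (by linarith)) hδ
      _ ≤ δ + 2 := by linarith
  · have hW : powerWeight (δ + ε) n = 1 := by
      rw [powerWeight, max_eq_right (by exact_mod_cast hn.le), one_rpow]
    rw [hW, one_mul]
    linarith [abs_sub (((n + 1 : ℤ) : ℝ) ^ (-δ)) ((n : ℝ) ^ (-δ)),
      abs_intCast_rpow_neg_le_one hδ (n + 1), abs_intCast_rpow_neg_le_one hδ n]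

end PowerWeight

/-- Decaying power-law asymptotics are preserved: if
`a(n,0) = 1/2 + α n^{-δ} + O(n^{-δ-ε})`, `b(n,0) = β n^{-δ} + O(n^{-δ-ε})` as `n → +∞`
(with `δ ≥ 0`, `0 < ε ≤ 1`) and `(a(0) − 1/2, b(0))` is bounded, then the bounded Toda
solution satisfies the same asymptotics for every fixed `t ∈ ℝ`. -/
theorem toda_power_asymptotics_preserved
    (α β δ ε : ℝ) (hδ : 0 ≤ δ) (hε0 : 0 < ε) (hε1 : ε ≤ 1)
    (a b : ℝ → ℤ → ℝ)
    (hbdd : ∀ T : ℝ, ∃ C, ∀ t ∈ Set.Icc (-T) T, ∀ n, |a t n| + |b t n| ≤ C)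
    (toda_a : ∀ t n, HasDerivAt (fun s => a s n) (a t n * (b t (n + 1) - b t n)) t)
    (toda_b : ∀ t n, HasDerivAt (fun s => b s n)
      (2 * ((a t n) ^ 2 - (a t (n - 1)) ^ 2)) t)
    (ha0 : (fun n : ℤ => a 0 n - 1 / 2 - α * (n : ℝ) ^ (-δ)) =O[atTop]
      (fun n : ℤ => (n : ℝ) ^ (-δ - ε)))
    (hb0 : (fun n : ℤ => b 0 n - β * (n : ℝ) ^ (-δ)) =O[atTop]
      (fun n : ℤ => (n : ℝ) ^ (-δ - ε))) :
    ∀ t, ((fun n : ℤ => a t n - 1 / 2 - α * (n : ℝ) ^ (-δ)) =O[atTop]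
        (fun n : ℤ => (n : ℝ) ^ (-δ - ε))) ∧
      ((fun n : ℤ => b t n - β * (n : ℝ) ^ (-δ)) =O[atTop]
        (fun n : ℤ => (n : ℝ) ^ (-δ - ε))) := by
  have hγ : 0 ≤ δ + ε := by linarith
  rw [show -δ - ε = -(δ + ε) by ring] at ha0 hb0 ⊢
  simp_rw [sub_sub] at ha0 ⊢
  have hab₀ := fun n : ℤ =>
    abs_add_mul_add_abs_mul_le (abs_intCast_rpow_neg_le_one hδ n) (1 / 2) α β
  have hgap := powerWeight_mul_abs_mul_rpow_neg_succ_sub_le hδ hε1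
  have hW := fun n => zero_le_one.trans (one_le_powerWeight hγ n)
  have hc := one_le_rpow one_le_two hγ
  obtain ⟨C₀, hC₀⟩ := hbdd 0
  have hres₀ := fun n => abs_sub_le_add_of_abs_add_abs_le (hC₀ 0 (by simp) n) (hab₀ n)
  obtain ⟨A₁, hA₁⟩ := exists_powerWeight_mul_abs_le_of_isBigO hγ (fun n => (hres₀ n).1) ha0
  obtain ⟨A₂, hA₂⟩ := exists_powerWeight_mul_abs_le_of_isBigO hγ (fun n => (hres₀ n).2) hb0
  intro t
  obtain ⟨M, hM⟩ := toda_weighted_residual_bounded toda_a toda_b hbdd hab₀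
    (G := (|α| + |β|) * (δ + 2)) hW hc
    (fun n => (powerWeight_mono hγ (Int.le_add_one le_rfl)).trans
      (le_mul_of_one_le_left (hW _) hc))
    (powerWeight_le_two_rpow_mul hγ)
    (fun n => by
      simpa only [add_sub_add_left_eq_sub] using (hgap α n).trans (by gcongr; simp))
    (fun n => (hgap β n).trans (by gcongr; simp))
    (fun n => ⟨(hA₁ n).trans (le_max_left A₁ A₂), (hA₂ n).trans (le_max_right A₁ A₂)⟩) t
  exact ⟨isBigO_rpow_neg_of_powerWeight_mul_abs_le fun n => (hM n).1,
    isBigO_rpow_neg_of_powerWeight_mul_abs_le fun n => (hM n).2⟩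
end

section
/- The sequences g_j, h_j defined by g_j(n) = Σ_{ℓ=0}^j c_{j−ℓ} ⟨δ_n, H^ℓ δ_n⟩ and h_j(n) = 2a(n) Σ_{ℓ=0}^j c_{j−ℓ} ⟨δ_{n+1}, H^ℓ δ_n⟩ + c_{j+1} satisfy the recursion relations g_0 = 1, h_0 = c_1, 2g_{j+1} − h_j − h_j⁻ − 2b g_j = 0 for 0 ≤ j ≤ r, and h_{j+1} − h_{j+1}⁻ − 2(a² g_j⁺ − (a⁻)² g_j⁻) − b(h_j − h_j⁻) = 0 for 0 ≤ j < r. -/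
/-!
`g_j(n)` and `h_j(n) - c_{j+1}` are, up to the factor `2 a(n)`, the matrix elements
`⟨δ_n, P_j δ_n⟩` and `⟨δ_{n+1}, P_j δ_n⟩` of `P_j = Σ_{ℓ ≤ j} c_{j-ℓ} H^ℓ`. These obey the
Horner recursion `P_{j+1} = H P_j + c_{j+1} = P_j H + c_{j+1}`, and the three-term action of `H`
expresses the matrix elements of `H X` and `X H` through those of `X`. The recursion relations
follow by reading off the appropriate entries, using in addition that the matrix of every `H^ℓ`
is symmetric.
-/

open Finset

local notation "ℓ²(" ι ")" => lp (fun _ : ι => ℝ) 2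

section Horner

variable {R A : Type*} [CommSemiring R] [Semiring A] [Algebra R A]

def hornerSum (c : ℕ → R) (j : ℕ) (x : A) : A :=
  ∑ ℓ ∈ range (j + 1), c (j - ℓ) • x ^ ℓ

theorem hornerSum_zero (c : ℕ → R) (x : A) : hornerSum c 0 x = algebraMap R A (c 0) := by
  simp [hornerSum, Algebra.algebraMap_eq_smul_one]

theorem hornerSum_succ (c : ℕ → R) (j : ℕ) (x : A) :
    hornerSum c (j + 1) x = algebraMap R A (c (j + 1)) + x * hornerSum c j x := by
  rw [hornerSum, sum_range_succ', hornerSum, mul_sum, Algebra.algebraMap_eq_smul_one, add_comm]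
  simp [pow_succ']

theorem hornerSum_succ' (c : ℕ → R) (j : ℕ) (x : A) :
    hornerSum c (j + 1) x = algebraMap R A (c (j + 1)) + hornerSum c j x * x := by
  rw [hornerSum, sum_range_succ', hornerSum, sum_mul, Algebra.algebraMap_eq_smul_one, add_comm]
  simp [pow_succ]

end Horner

section MatrixEntry

variable {ι : Type*} [DecidableEq ι]

noncomputable def matrixEntry (m n : ι) : (ℓ²(ι) →L[ℝ] ℓ²(ι)) →ₗ[ℝ] ℝ where
  toFun X := X (lp.single 2 n 1) m
  map_add' _ _ := rfl
  map_smul' _ _ := rfl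

@[simp]
theorem matrixEntry_apply (m n : ι) (X : ℓ²(ι) →L[ℝ] ℓ²(ι)) :
    matrixEntry m n X = X (lp.single 2 n 1) m :=
  rfl

theorem inner_single_apply_single (X : ℓ²(ι) →L[ℝ] ℓ²(ι)) (m n : ι) :
    inner ℝ (lp.single 2 m (1 : ℝ)) (X (lp.single 2 n 1)) = matrixEntry m n X := by
  simp [lp.inner_single_left]

theorem matrixEntry_algebraMap (m n : ι) (t : ℝ) :
    matrixEntry m n (algebraMap ℝ (ℓ²(ι) →L[ℝ] ℓ²(ι)) t) = if m = n then t else 0 := by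
  simp [Algebra.algebraMap_eq_smul_one, lp.single_apply, Pi.single_apply]

theorem matrixEntry_hornerSum (c : ℕ → ℝ) (j : ℕ) (X : ℓ²(ι) →L[ℝ] ℓ²(ι)) (m n : ι) :
    matrixEntry m n (hornerSum c j X) =
      ∑ ℓ ∈ range (j + 1), c (j - ℓ) * matrixEntry m n (X ^ ℓ) := by
  simp [hornerSum, map_sum, map_smul]

end MatrixEntry

def IsJacobiOperator (a b : ℤ → ℝ) (H : ℓ²(ℤ) →L[ℝ] ℓ²(ℤ)) : Prop :=
  ∀ (f : ℓ²(ℤ)) n, H f n = a n * f (n + 1) + a (n - 1) * f (n - 1) + b n * f n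

namespace IsJacobiOperator

variable {a b : ℤ → ℝ} {H : ℓ²(ℤ) →L[ℝ] ℓ²(ℤ)}

theorem matrixEntry_mul_left (hH : IsJacobiOperator a b H) (X : ℓ²(ℤ) →L[ℝ] ℓ²(ℤ)) (m n : ℤ) :
    matrixEntry m n (H * X) = a m * matrixEntry (m + 1) n X + a (m - 1) * matrixEntry (m - 1) n X
      + b m * matrixEntry m n X :=
  hH _ m

theorem apply_single (hH : IsJacobiOperator a b H) (n : ℤ) :
    H (lp.single 2 n 1) = a n • lp.single 2 (n + 1) 1 + a (n - 1) • lp.single 2 (n - 1) 1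
      + b n • lp.single 2 n 1 := by
  ext m
  rw [hH]
  simp only [lp.coeFn_add, lp.coeFn_smul, Pi.add_apply, Pi.smul_apply, smul_eq_mul,
    lp.single_apply, Pi.single_apply]
  split_ifs <;> first | (exfalso; omega) | ring1 | (ring_nf; congr 1 <;> omega)

theorem matrixEntry_mul_right (hH : IsJacobiOperator a b H) (X : ℓ²(ℤ) →L[ℝ] ℓ²(ℤ))
    (m n : ℤ) :
    matrixEntry m n (X * H) = a (n - 1) * matrixEntry m (n - 1) X + a n * matrixEntry m (n + 1) X
      + b n * matrixEntry m n X := by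
  simp only [matrixEntry_apply, mul_apply_eq_comp, hH.apply_single, map_add, map_smul,
    lp.coeFn_add, lp.coeFn_smul, Pi.add_apply, Pi.smul_apply, smul_eq_mul]
  ring

theorem matrixEntry_pow_comm (hH : IsJacobiOperator a b H) (ℓ : ℕ) (m n : ℤ) :
    matrixEntry m n (H ^ ℓ) = matrixEntry n m (H ^ ℓ) := by
  induction ℓ generalizing m n with
  | zero => simp [lp.single_apply, Pi.single_apply, eq_comm]
  | succ ℓ ih =>
    rw [pow_succ', hH.matrixEntry_mul_left, (Commute.self_pow H ℓ).eq, hH.matrixEntry_mul_right,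
      ih (m + 1), ih (m - 1), ih m]
    ring

theorem matrixEntry_hornerSum_comm (hH : IsJacobiOperator a b H) (c : ℕ → ℝ) (j : ℕ) (m n : ℤ) :
    matrixEntry m n (hornerSum c j H) = matrixEntry n m (hornerSum c j H) := by
  simp only [matrixEntry_hornerSum, hH.matrixEntry_pow_comm _ m n]

theorem matrixEntry_hornerSum_succ_left (hH : IsJacobiOperator a b H) (c : ℕ → ℝ)
    (j : ℕ) (m n : ℤ) :
    matrixEntry m n (hornerSum c (j + 1) H) = (if m = n then c (j + 1) else 0) +
      (a m * matrixEntry (m + 1) n (hornerSum c j H)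
        + a (m - 1) * matrixEntry (m - 1) n (hornerSum c j H)
        + b m * matrixEntry m n (hornerSum c j H)) := by
  rw [hornerSum_succ, map_add, matrixEntry_algebraMap, hH.matrixEntry_mul_left]

theorem matrixEntry_hornerSum_succ_right (hH : IsJacobiOperator a b H) (c : ℕ → ℝ)
    (j : ℕ) (m n : ℤ) :
    matrixEntry m n (hornerSum c (j + 1) H) = (if m = n then c (j + 1) else 0) +
      (a (n - 1) * matrixEntry m (n - 1) (hornerSum c j H)
        + a n * matrixEntry m (n + 1) (hornerSum c j H)
        + b n * matrixEntry m n (hornerSum c j H)) := by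
  rw [hornerSum_succ', map_add, matrixEntry_algebraMap, hH.matrixEntry_mul_right]

end IsJacobiOperator

section Toda

variable {a b : ℤ → ℝ} {H : ℓ²(ℤ) →L[ℝ] ℓ²(ℤ)} (c : ℕ → ℝ)

noncomputable def todaG (H : ℓ²(ℤ) →L[ℝ] ℓ²(ℤ)) (j : ℕ) (n : ℤ) : ℝ :=
  matrixEntry n n (hornerSum c j H)

noncomputable def todaH (a : ℤ → ℝ) (H : ℓ²(ℤ) →L[ℝ] ℓ²(ℤ)) (j : ℕ) (n : ℤ) : ℝ :=
  2 * a n * matrixEntry (n + 1) n (hornerSum c j H) + c (j + 1)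

theorem todaG_zero (hc0 : c 0 = 1) (n : ℤ) : todaG c H 0 n = 1 := by
  rw [todaG, hornerSum_zero, matrixEntry_algebraMap, if_pos rfl, hc0]

theorem todaH_zero (n : ℤ) : todaH c a H 0 n = c 1 := by
  rw [todaH, hornerSum_zero, matrixEntry_algebraMap, if_neg (by omega), mul_zero, zero_add]

theorem IsJacobiOperator.todaG_succ (hH : IsJacobiOperator a b H) (j : ℕ) (n : ℤ) :
    2 * todaG c H (j + 1) n - todaH c a H j n - todaH c a H j (n - 1)
      - 2 * b n * todaG c H j n = 0 := by
  simp only [todaG, todaH, sub_add_cancel, hH.matrixEntry_hornerSum_succ_right, ↓reduceIte,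
    hH.matrixEntry_hornerSum_comm c j n (n + 1)]
  ring

theorem IsJacobiOperator.todaH_succ (hH : IsJacobiOperator a b H) (j : ℕ) (n : ℤ) :
    todaH c a H (j + 1) n - todaH c a H (j + 1) (n - 1)
      - 2 * ((a n) ^ 2 * todaG c H j (n + 1) - (a (n - 1)) ^ 2 * todaG c H j (n - 1))
      - b n * (todaH c a H j n - todaH c a H j (n - 1)) = 0 := by
  simp only [todaG, todaH, sub_add_cancel]
  rw [hH.matrixEntry_hornerSum_succ_right, if_neg (by omega),
    hH.matrixEntry_hornerSum_succ_left, if_neg (by omega)]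
  ring

end Toda

theorem toda_hierarchy_recursion_relations_general
    (a b : ℤ → ℝ)
    (H : lp (fun _ : ℤ => ℝ) 2 →L[ℝ] lp (fun _ : ℤ => ℝ) 2)
    (hH : ∀ (f : lp (fun _ : ℤ => ℝ) 2) n,
      H f n = a n * f (n + 1) + a (n - 1) * f (n - 1) + b n * f n)
    (r : ℕ) (c : ℕ → ℝ) (hc0 : c 0 = 1)
    (g h : ℕ → ℤ → ℝ)
    (hg : ∀ j n, g j n = ∑ ℓ ∈ Finset.range (j + 1),
      c (j - ℓ) * inner (𝕜 := ℝ) (lp.single 2 n (1 : ℝ)) ((H ^ ℓ) (lp.single 2 n 1)))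
    (hh : ∀ j n, h j n = 2 * a n * (∑ ℓ ∈ Finset.range (j + 1),
      c (j - ℓ) * inner (𝕜 := ℝ) (lp.single 2 (n + 1) (1 : ℝ)) ((H ^ ℓ) (lp.single 2 n 1)))
      + c (j + 1)) :
    (∀ n, g 0 n = 1) ∧ (∀ n, h 0 n = c 1) ∧
    (∀ j ≤ r, ∀ n, 2 * g (j + 1) n - h j n - h j (n - 1) - 2 * b n * g j n = 0) ∧
    (∀ j < r, ∀ n, h (j + 1) n - h (j + 1) (n - 1)
      - 2 * ((a n) ^ 2 * g j (n + 1) - (a (n - 1)) ^ 2 * g j (n - 1))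
      - b n * (h j n - h j (n - 1)) = 0) := by
  have hJ : IsJacobiOperator a b H := hH
  obtain rfl : g = todaG c H := by
    funext j n
    simp only [hg, todaG, matrixEntry_hornerSum, inner_single_apply_single]
  obtain rfl : h = todaH c a H := by
    funext j n
    simp only [hh, todaH, matrixEntry_hornerSum, inner_single_apply_single]
  exact ⟨todaG_zero c hc0, todaH_zero c, fun j _ => hJ.todaG_succ c j,
    fun j _ => hJ.todaH_succ c j⟩

/-- The sequences `g_j(n) = Σ_{ℓ=0}^j c_{j−ℓ} ⟨δ_n, H^ℓ δ_n⟩` and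
`h_j(n) = 2a(n) Σ_{ℓ=0}^j c_{j−ℓ} ⟨δ_{n+1}, H^ℓ δ_n⟩ + c_{j+1}` satisfy the Toda
hierarchy recursion relations. -/
theorem toda_hierarchy_recursion_relations
    (a b : ℤ → ℝ) (ha_bdd : ∃ C, ∀ n, |a n| ≤ C) (hb_bdd : ∃ C, ∀ n, |b n| ≤ C)
    (H : lp (fun _ : ℤ => ℝ) 2 →L[ℝ] lp (fun _ : ℤ => ℝ) 2)
    (hH : ∀ (f : lp (fun _ : ℤ => ℝ) 2) n,
      H f n = a n * f (n + 1) + a (n - 1) * f (n - 1) + b n * f n)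
    (r : ℕ) (c : ℕ → ℝ) (hc0 : c 0 = 1) (hcr : c (r + 1) = 0)
    (g h : ℕ → ℤ → ℝ)
    (hg : ∀ j n, g j n = ∑ ℓ ∈ Finset.range (j + 1),
      c (j - ℓ) * inner (𝕜 := ℝ) (lp.single 2 n (1 : ℝ)) ((H ^ ℓ) (lp.single 2 n 1)))
    (hh : ∀ j n, h j n = 2 * a n * (∑ ℓ ∈ Finset.range (j + 1),
      c (j - ℓ) * inner (𝕜 := ℝ) (lp.single 2 (n + 1) (1 : ℝ)) ((H ^ ℓ) (lp.single 2 n 1)))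
      + c (j + 1)) :
    (∀ n, g 0 n = 1) ∧ (∀ n, h 0 n = c 1) ∧
    (∀ j ≤ r, ∀ n, 2 * g (j + 1) n - h j n - h j (n - 1) - 2 * b n * g j n = 0) ∧
    (∀ j < r, ∀ n, h (j + 1) n - h (j + 1) (n - 1)
      - 2 * ((a n) ^ 2 * g j (n + 1) - (a (n - 1)) ^ 2 * g j (n - 1))
      - b n * (h j n - h j (n - 1)) = 0) :=
  toda_hierarchy_recursion_relations_general a b H hH r c hc0 g h hg hh
end

section
/- If (a₀, b₀) are bounded sequences with ‖(a₀⁺ − a₀, b₀⁺ − b₀)‖_{w,p} < ∞, then for each j the quantities g_{0,j}⁺ − g_{0,j} and h_{0,j} − h_{0,j}⁻ formed from (a₀, b₀) via the Toda hierarchy recursion satisfy ‖g_{0,j}⁺ − g_{0,j}‖_{w,p} < ∞ and ‖h_{0,j} − h_{0,j}⁻‖_{w,p} < ∞ (proved by induction on j using the recursion). -/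
/-!
Finiteness of `‖·‖_{w,p}` is preserved by sums, by multiplication with bounded sequences and,
since `w (n ± 1) ≍ w n`, by shifts. Hence if `u, v` are bounded with differences of finite norm,
so is the difference of `u v`, as `Δ(u v) = u⁺ Δv + v Δu`. The recursion writes `Δg_{j+1}` and
`h_{j+1} − h_{j+1}⁻` as combinations, with bounded coefficients, of shifts of `Δg_j`,
`h_j − h_j⁻`, `Δ(b g_j)` and `Δ(a² g_j)`, so finiteness passes from `j` to `j + 1`.
-/

open scoped ENNReal fwdDiff

noncomputable def wnorm (w : ℤ → ℝ) (p : ℝ≥0∞) (f : ℤ → ℝ) : ℝ≥0∞ :=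
  if p = ∞ then ⨆ n, ENNReal.ofReal (w n * |f n|)
  else (∑' n, ENNReal.ofReal (w n * |f n| ^ p.toReal)) ^ (1 / p.toReal)

lemma ENNReal.rpow_ne_top_of_le_mul {a b K : ℝ≥0∞} {s : ℝ} (hs : 0 ≤ s) (hK : K ≠ ∞)
    (hb : b ^ s ≠ ∞) (hab : a ≤ K * b) : a ^ s ≠ ∞ :=
  ne_top_of_le_ne_top (ENNReal.mul_ne_top (ENNReal.rpow_ne_top_of_nonneg hs hK) hb)
    ((ENNReal.rpow_le_rpow hab hs).trans_eq (ENNReal.mul_rpow_of_nonneg _ _ hs))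

section WeightedNorm

variable {w : ℤ → ℝ} {p : ℝ≥0∞} {f g u v : ℤ → ℝ}

lemma wnorm_top_eq : wnorm w ∞ f = ⨆ n, ENNReal.ofReal (w n) * ‖f n‖ₑ := by
  simp only [wnorm, if_true, Real.enorm_eq_ofReal_abs, ENNReal.ofReal_mul' (abs_nonneg _)]

lemma wnorm_eq_of_ne_top (hp : p ≠ ∞) :
    wnorm w p f = (∑' n, ENNReal.ofReal (w n) * ‖f n‖ₑ ^ p.toReal) ^ (1 / p.toReal) := by
  simp only [wnorm, if_neg hp, Real.enorm_eq_ofReal_abs,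
    ENNReal.ofReal_rpow_of_nonneg (abs_nonneg _) ENNReal.toReal_nonneg,
    ENNReal.ofReal_mul' (Real.rpow_nonneg (abs_nonneg _) _)]

theorem wnorm_mul_ne_top {C : ℝ} (hu : ∀ n, |u n| ≤ C) (hf : wnorm w p f ≠ ∞) :
    wnorm w p (fun n => u n * f n) ≠ ∞ := by
  have hle : ∀ n, ‖u n * f n‖ₑ ≤ ENNReal.ofReal C * ‖f n‖ₑ := fun n => by
    rw [enorm_mul, Real.enorm_eq_ofReal_abs (u n)]
    gcongr
    exact hu n
  by_cases hp : p = ∞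
  · subst hp
    rw [wnorm_top_eq] at hf ⊢
    refine ne_top_of_le_ne_top (ENNReal.mul_ne_top (ENNReal.ofReal_ne_top (r := C)) hf)
      (iSup_le fun n => ?_)
    calc ENNReal.ofReal (w n) * ‖u n * f n‖ₑ
        ≤ ENNReal.ofReal (w n) * (ENNReal.ofReal C * ‖f n‖ₑ) := by gcongr; exact hle n
      _ = ENNReal.ofReal C * (ENNReal.ofReal (w n) * ‖f n‖ₑ) := by ring
      _ ≤ _ := by gcongr; exact le_iSup (fun m => ENNReal.ofReal (w m) * ‖f m‖ₑ) n
  · rw [wnorm_eq_of_ne_top hp] at hf ⊢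
    refine ENNReal.rpow_ne_top_of_le_mul (K := ENNReal.ofReal C ^ p.toReal) (by positivity)
      (ENNReal.rpow_ne_top_of_nonneg ENNReal.toReal_nonneg ENNReal.ofReal_ne_top) hf ?_
    rw [← ENNReal.tsum_mul_left]
    refine ENNReal.tsum_le_tsum fun n => ?_
    calc ENNReal.ofReal (w n) * ‖u n * f n‖ₑ ^ p.toReal
        ≤ ENNReal.ofReal (w n) * (ENNReal.ofReal C * ‖f n‖ₑ) ^ p.toReal := by gcongr; exact hle n
      _ = ENNReal.ofReal C ^ p.toReal * (ENNReal.ofReal (w n) * ‖f n‖ₑ ^ p.toReal) := by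
        rw [ENNReal.mul_rpow_of_nonneg _ _ ENNReal.toReal_nonneg]; ring

theorem wnorm_add_ne_top (hf : wnorm w p f ≠ ∞) (hg : wnorm w p g ≠ ∞) :
    wnorm w p (fun n => f n + g n) ≠ ∞ := by
  by_cases hp : p = ∞
  · subst hp
    rw [wnorm_top_eq] at hf hg ⊢
    refine ne_top_of_le_ne_top (ENNReal.add_ne_top.mpr ⟨hf, hg⟩) (iSup_le fun n => ?_)
    calc ENNReal.ofReal (w n) * ‖f n + g n‖ₑ
        ≤ ENNReal.ofReal (w n) * ‖f n‖ₑ + ENNReal.ofReal (w n) * ‖g n‖ₑ := by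
          rw [← mul_add]; gcongr; exact enorm_add_le _ _
      _ ≤ _ := add_le_add (le_iSup (fun n => ENNReal.ofReal (w n) * ‖f n‖ₑ) n)
          (le_iSup (fun n => ENNReal.ofReal (w n) * ‖g n‖ₑ) n)
  · rw [wnorm_eq_of_ne_top hp] at hf hg ⊢
    set t := p.toReal
    have ht : 0 ≤ t := ENNReal.toReal_nonneg
    have hs : 0 ≤ 1 / t := by positivity
    set K := ENNReal.LpAddConst (ENNReal.ofReal t)⁻¹
    refine ENNReal.rpow_ne_top_of_le_mul (K := K) hs (ENNReal.LpAddConst_lt_top _).ne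
      (ne_top_of_le_ne_top (ENNReal.mul_ne_top (ENNReal.LpAddConst_lt_top _).ne
        (ENNReal.add_ne_top.mpr ⟨hf, hg⟩)) (ENNReal.rpow_add_le_mul_rpow_add_rpow' _ _ hs)) ?_
    rw [← ENNReal.tsum_add, ← ENNReal.tsum_mul_left]
    refine ENNReal.tsum_le_tsum fun n => ?_
    calc ENNReal.ofReal (w n) * ‖f n + g n‖ₑ ^ t
        ≤ ENNReal.ofReal (w n) * (‖f n‖ₑ + ‖g n‖ₑ) ^ t := by gcongr; exact enorm_add_le _ _
      _ ≤ ENNReal.ofReal (w n) * (K * (‖f n‖ₑ ^ t + ‖g n‖ₑ ^ t)) := by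
          gcongr; exact ENNReal.rpow_add_le_mul_rpow_add_rpow' _ _ ht
      _ = K * (ENNReal.ofReal (w n) * ‖f n‖ₑ ^ t + ENNReal.ofReal (w n) * ‖g n‖ₑ ^ t) := by
          ring

theorem wnorm_comp_add_ne_top {C : ℝ} (k : ℤ) (hC : 0 ≤ C) (hw : ∀ n, w n ≤ C * w (n + k))
    (hf : wnorm w p f ≠ ∞) : wnorm w p (fun n => f (n + k)) ≠ ∞ := by
  have hw' : ∀ n, ENNReal.ofReal (w n) ≤ ENNReal.ofReal C * ENNReal.ofReal (w (n + k)) :=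
    fun n => (ENNReal.ofReal_le_ofReal (hw n)).trans_eq (ENNReal.ofReal_mul hC)
  by_cases hp : p = ∞
  · subst hp
    rw [wnorm_top_eq] at hf ⊢
    refine ne_top_of_le_ne_top (ENNReal.mul_ne_top (ENNReal.ofReal_ne_top (r := C)) hf)
      (iSup_le fun n => ?_)
    calc ENNReal.ofReal (w n) * ‖f (n + k)‖ₑ
        ≤ ENNReal.ofReal C * (ENNReal.ofReal (w (n + k)) * ‖f (n + k)‖ₑ) := by
          rw [← mul_assoc]; gcongr; exact hw' n
      _ ≤ _ := by gcongr; exact le_iSup (fun m => ENNReal.ofReal (w m) * ‖f m‖ₑ) (n + k)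
  · rw [wnorm_eq_of_ne_top hp] at hf ⊢
    refine ENNReal.rpow_ne_top_of_le_mul (by positivity) (ENNReal.ofReal_ne_top (r := C)) hf ?_
    calc ∑' n, ENNReal.ofReal (w n) * ‖f (n + k)‖ₑ ^ p.toReal
        ≤ ∑' n, ENNReal.ofReal C * (ENNReal.ofReal (w (n + k)) * ‖f (n + k)‖ₑ ^ p.toReal) := by
          refine ENNReal.tsum_le_tsum fun n => ?_
          rw [← mul_assoc]; gcongr; exact hw' n
      _ = ENNReal.ofReal C * ∑' n, ENNReal.ofReal (w n) * ‖f n‖ₑ ^ p.toReal := by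
          rw [ENNReal.tsum_mul_left,
            ← (Equiv.addRight k).tsum_eq fun n => ENNReal.ofReal (w n) * ‖f n‖ₑ ^ p.toReal]
          rfl

theorem wnorm_fwdDiff_ne_top_of_bwdDiff {C : ℝ} (hC : 0 ≤ C) (hw : ∀ n, w n ≤ C * w (n + 1))
    (hf : wnorm w p (fun n => f n - f (n - 1)) ≠ ∞) : wnorm w p (Δ_[1] f) ≠ ∞ := by
  show wnorm w p (fun n => f (n + 1) - f n) ≠ ∞
  simpa using wnorm_comp_add_ne_top 1 hC hw hf

theorem wnorm_bwdDiff_ne_top_of_fwdDiff {C : ℝ} (hC : 0 ≤ C) (hw : ∀ n, w n ≤ C * w (n - 1))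
    (hf : wnorm w p (Δ_[1] f) ≠ ∞) : wnorm w p (fun n => f n - f (n - 1)) ≠ ∞ := by
  simpa [fwdDiff, ← sub_eq_add_neg] using
    wnorm_comp_add_ne_top (-1) hC (by simpa [← sub_eq_add_neg] using hw) hf

theorem wnorm_fwdDiff_mul_ne_top {Cu Cv : ℝ} (hu : ∀ n, |u n| ≤ Cu) (hv : ∀ n, |v n| ≤ Cv)
    (hΔu : wnorm w p (Δ_[1] u) ≠ ∞) (hΔv : wnorm w p (Δ_[1] v) ≠ ∞) :
    wnorm w p (Δ_[1] (u * v)) ≠ ∞ := by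
  have hprod : Δ_[1] (u * v) = fun n => u (n + 1) * Δ_[1] v n + v n * Δ_[1] u n := by
    ext n; simp only [fwdDiff, Pi.mul_apply]; ring
  rw [hprod]
  exact wnorm_add_ne_top (wnorm_mul_ne_top (fun n => hu (n + 1)) hΔv) (wnorm_mul_ne_top hv hΔu)

end WeightedNorm

lemma weight_le_mul_shift {w : ℤ → ℝ} {C : ℝ} (hw : ∀ n, 0 < w n)
    (hC : ∀ n, w (n + 1) / w n + w n / w (n + 1) ≤ C) :
    0 ≤ C ∧ (∀ n, w n ≤ C * w (n + 1)) ∧ ∀ n, w n ≤ C * w (n - 1) := by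
  have hratio : ∀ m n, 0 < w m / w n := fun m n => div_pos (hw m) (hw n)
  refine ⟨(add_pos (hratio 1 0) (hratio 0 1)).le.trans (hC 0), fun n => ?_, fun n => ?_⟩
  · rw [← div_le_iff₀ (hw _)]
    linarith [hC n, hratio (n + 1) n]
  · rw [← div_le_iff₀ (hw _)]
    have := hC (n - 1)
    rw [sub_add_cancel] at this
    linarith [hratio (n - 1) n]

section TodaStep

variable {w : ℤ → ℝ} {p : ℝ≥0∞} {C A B G : ℝ} {a b g h g' h' : ℤ → ℝ}

theorem wnorm_fwdDiff_next_g_ne_top (hC : 0 ≤ C) (hw : ∀ n, w n ≤ C * w (n + 1))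
    (hb : ∀ n, |b n| ≤ B) (hg : ∀ n, |g n| ≤ G)
    (hΔb : wnorm w p (Δ_[1] b) ≠ ∞) (hΔg : wnorm w p (Δ_[1] g) ≠ ∞)
    (hh : wnorm w p (fun n => h n - h (n - 1)) ≠ ∞)
    (hrec : ∀ n, 2 * g' n = h n + h (n - 1) + 2 * b n * g n) :
    wnorm w p (Δ_[1] g') ≠ ∞ := by
  have hhalf : ∀ _ : ℤ, |(1 / 2 : ℝ)| ≤ 1 / 2 := fun _ => (abs_of_pos one_half_pos).le
  have hΔg' : Δ_[1] g' = fun n => (1 / 2 * Δ_[1] h n + 1 / 2 * (h n - h (n - 1)))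
      + Δ_[1] (b * g) n := by
    ext n
    have := hrec (n + 1)
    rw [add_sub_cancel_right] at this
    simp only [fwdDiff, Pi.mul_apply]
    linarith [hrec n]
  rw [hΔg']
  exact wnorm_add_ne_top
    (wnorm_add_ne_top (wnorm_mul_ne_top hhalf (wnorm_fwdDiff_ne_top_of_bwdDiff hC hw hh))
      (wnorm_mul_ne_top hhalf hh))
    (wnorm_fwdDiff_mul_ne_top hb hg hΔb hΔg)

theorem wnorm_bwdDiff_next_h_ne_top (hC : 0 ≤ C) (hw : ∀ n, w n ≤ C * w (n - 1))
    (ha : ∀ n, |a n| ≤ A) (hb : ∀ n, |b n| ≤ B) (hg : ∀ n, |g n| ≤ G)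
    (hΔa : wnorm w p (Δ_[1] a) ≠ ∞) (hΔg : wnorm w p (Δ_[1] g) ≠ ∞)
    (hh : wnorm w p (fun n => h n - h (n - 1)) ≠ ∞)
    (hrec : ∀ n, h' n - h' (n - 1)
      = 2 * ((a n) ^ 2 * g (n + 1) - (a (n - 1)) ^ 2 * g (n - 1)) + b n * (h n - h (n - 1))) :
    wnorm w p (fun n => h' n - h' (n - 1)) ≠ ∞ := by
  have haa : ∀ n, |(a * a) n| ≤ A * A := fun n => by
    rw [Pi.mul_apply, abs_mul]
    exact mul_le_mul (ha n) (ha n) (abs_nonneg _) ((abs_nonneg _).trans (ha n))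
  have ha2 : ∀ n, |2 * a n ^ 2| ≤ 2 * A ^ 2 := fun n => by
    rw [abs_mul, abs_pow, abs_two]
    gcongr
    exact ha n
  have hΔaag : wnorm w p (fun n => (a * a * g) n - (a * a * g) (n - 1)) ≠ ∞ :=
    wnorm_bwdDiff_ne_top_of_fwdDiff hC hw
      (wnorm_fwdDiff_mul_ne_top haa hg (wnorm_fwdDiff_mul_ne_top ha ha hΔa hΔa) hΔg)
  have hsplit : (fun n => h' n - h' (n - 1)) = fun n => (2 * a n ^ 2 * Δ_[1] g n
      + 2 * ((a * a * g) n - (a * a * g) (n - 1))) + b n * (h n - h (n - 1)) := by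
    ext n
    rw [hrec n]
    simp only [fwdDiff, Pi.mul_apply]
    ring
  rw [hsplit]
  exact wnorm_add_ne_top
    (wnorm_add_ne_top (wnorm_mul_ne_top ha2 hΔg) (wnorm_mul_ne_top (fun _ => le_refl |2|) hΔaag))
    (wnorm_mul_ne_top hb hh)

end TodaStep

theorem toda_hierarchy_inhomogeneity_finite_norm_general
    (w : ℤ → ℝ) (hw1 : ∀ n, 1 ≤ w n)
    (hw2 : ∃ C : ℝ, ∀ n, w (n + 1) / w n + w n / w (n + 1) ≤ C)
    (p : ℝ≥0∞)
    (a₀ b₀ : ℤ → ℝ)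
    (ha₀bdd : ∃ C, ∀ n, |a₀ n| + |b₀ n| ≤ C)
    (hfin_a : wnorm w p (fun n => a₀ (n + 1) - a₀ n) ≠ ∞)
    (hfin_b : wnorm w p (fun n => b₀ (n + 1) - b₀ n) ≠ ∞)
    (c : ℕ → ℝ)
    (g h : ℕ → ℤ → ℝ)
    (hgh_bdd : ∀ j, ∃ C, ∀ n, |g j n| + |h j n| ≤ C)
    (hg0 : ∀ n, g 0 n = 1) (hh0 : ∀ n, h 0 n = c 1)
    (hgrec : ∀ j n, 2 * g (j + 1) n = h j n + h j (n - 1) + 2 * b₀ n * g j n)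
    (hhrec : ∀ j n, h (j + 1) n - h (j + 1) (n - 1)
      = 2 * ((a₀ n) ^ 2 * g j (n + 1) - (a₀ (n - 1)) ^ 2 * g j (n - 1))
        + b₀ n * (h j n - h j (n - 1))) :
    ∀ j, wnorm w p (fun n => g j (n + 1) - g j n) ≠ ∞ ∧
      wnorm w p (fun n => h j n - h j (n - 1)) ≠ ∞ := by
  obtain ⟨Cw, hCw⟩ := hw2
  obtain ⟨hCw0, hw_next, hw_prev⟩ := weight_le_mul_shift (fun n => one_pos.trans_le (hw1 n)) hCw
  obtain ⟨A, hA⟩ := ha₀bdd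
  have ha : ∀ n, |a₀ n| ≤ A := fun n => (le_add_of_nonneg_right (abs_nonneg _)).trans (hA n)
  have hb : ∀ n, |b₀ n| ≤ A := fun n => (le_add_of_nonneg_left (abs_nonneg _)).trans (hA n)
  intro j
  induction j with
  | zero =>
    have hzero : wnorm w p (fun _ => 0) ≠ ∞ := by
      simpa using wnorm_mul_ne_top (u := 0) (fun _ => abs_zero.le) hfin_a
    exact ⟨by simpa [hg0] using hzero, by simpa [hh0] using hzero⟩
  | succ j ih =>
    obtain ⟨G, hG⟩ := hgh_bdd j
    have hg : ∀ n, |g j n| ≤ G := fun n => (le_add_of_nonneg_right (abs_nonneg _)).trans (hG n)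
    exact ⟨wnorm_fwdDiff_next_g_ne_top hCw0 hw_next hb hg hfin_b ih.1 ih.2 (hgrec j),
      wnorm_bwdDiff_next_h_ne_top hCw0 hw_prev ha hb hg hfin_a ih.1 ih.2 (hhrec j)⟩

/-- If `(a₀, b₀)` are bounded sequences with
`‖(a₀⁺ − a₀, b₀⁺ − b₀)‖_{w,p} < ∞`, then for each `j` the quantities
`g_{0,j}⁺ − g_{0,j}` and `h_{0,j} − h_{0,j}⁻` formed from `(a₀, b₀)` via the Toda
hierarchy recursion have finite `‖·‖_{w,p}` norm. -/
theorem toda_hierarchy_inhomogeneity_finite_norm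
    (w : ℤ → ℝ) (hw1 : ∀ n, 1 ≤ w n)
    (hw2 : ∃ C : ℝ, ∀ n, w (n + 1) / w n + w n / w (n + 1) ≤ C)
    (p : ℝ≥0∞) (hp : 1 ≤ p)
    (a₀ b₀ : ℤ → ℝ)
    (ha₀bdd : ∃ C, ∀ n, |a₀ n| + |b₀ n| ≤ C)
    (hfin_a : wnorm w p (fun n => a₀ (n + 1) - a₀ n) ≠ ∞)
    (hfin_b : wnorm w p (fun n => b₀ (n + 1) - b₀ n) ≠ ∞)
    (c : ℕ → ℝ)
    (g h : ℕ → ℤ → ℝ)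
    (hgh_bdd : ∀ j, ∃ C, ∀ n, |g j n| + |h j n| ≤ C)
    (hg0 : ∀ n, g 0 n = 1) (hh0 : ∀ n, h 0 n = c 1)
    (hgrec : ∀ j n, 2 * g (j + 1) n = h j n + h j (n - 1) + 2 * b₀ n * g j n)
    (hhrec : ∀ j n, h (j + 1) n - h (j + 1) (n - 1)
      = 2 * ((a₀ n) ^ 2 * g j (n + 1) - (a₀ (n - 1)) ^ 2 * g j (n - 1))
        + b₀ n * (h j n - h j (n - 1))) :
    ∀ j, wnorm w p (fun n => g j (n + 1) - g j n) ≠ ∞ ∧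
      wnorm w p (fun n => h j n - h j (n - 1)) ≠ ∞ :=
  toda_hierarchy_inhomogeneity_finite_norm_general w hw1 hw2 p a₀ b₀ ha₀bdd hfin_a hfin_b c g h
    hgh_bdd hg0 hh0 hgrec hhrec
end
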